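/- arXiv:1908.04438 — 9 statements merged into one kernel-verified Lean document; each statement's English description precedes it below -/
import Mathlib

section
/- For any two bounded sets A, B in ℝ^d, diam(A ⊕ B)² ≥ diam(A)² + diam(B)², where diam denotes the Euclidean diameter and ⊕ the Minkowski sum. -/
/-!
The four points `a + b, a' + b', a + b', a' + b` of `A + B` are the vertices of a parallelogram
whose diagonals are `(a - a') ± (b - b')`. Both diagonals are at most `diam (A + B)`, so the
parallelogram law gives `‖a - a'‖² + ‖b - b'‖² ≤ diam (A + B)²`; taking suprema first over
`a, a'` and then over `b, b'` yields the claim.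
-/

open Pointwise Metric

theorem sq_diam_le_of_forall_sq_dist_le {α : Type*} [PseudoMetricSpace α] {s : Set α} {c : ℝ}
    (hs : s.Nonempty) (h : ∀ x ∈ s, ∀ y ∈ s, dist x y ^ 2 ≤ c) : diam s ^ 2 ≤ c := by
  obtain ⟨x₀, hx₀⟩ := hs
  have hc : 0 ≤ c := by simpa using h x₀ hx₀ x₀ hx₀
  have hdiam : diam s ≤ √c := diam_le_of_forall_dist_le (Real.sqrt_nonneg c) fun x hx y hy =>
    (Real.le_sqrt dist_nonneg hc).2 (h x hx y hy)
  exact (Real.le_sqrt diam_nonneg hc).1 hdiam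

theorem sq_diam_add_sq_diam_le_of_forall_sq_dist_add_le {α β : Type*}
    [PseudoMetricSpace α] [PseudoMetricSpace β] {s : Set α} {t : Set β} {c : ℝ}
    (hs : s.Nonempty) (ht : t.Nonempty)
    (h : ∀ x ∈ s, ∀ x' ∈ s, ∀ y ∈ t, ∀ y' ∈ t, dist x x' ^ 2 + dist y y' ^ 2 ≤ c) :
    diam s ^ 2 + diam t ^ 2 ≤ c := by
  have hs_le : ∀ y ∈ t, ∀ y' ∈ t, diam s ^ 2 ≤ c - dist y y' ^ 2 := fun y hy y' hy' =>
    sq_diam_le_of_forall_sq_dist_le hs fun x hx x' hx' => by linarith [h x hx x' hx' y hy y' hy']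
  have ht_le : diam t ^ 2 ≤ c - diam s ^ 2 :=
    sq_diam_le_of_forall_sq_dist_le ht fun y hy y' hy' => by linarith [hs_le y hy y' hy']
  linarith

theorem sq_norm_add_sq_norm_le_of_norm_add_le_of_norm_sub_le {E : Type*}
    [SeminormedAddCommGroup E] [InnerProductSpace ℝ E] {x y : E} {D : ℝ}
    (hadd : ‖x + y‖ ≤ D) (hsub : ‖x - y‖ ≤ D) : ‖x‖ ^ 2 + ‖y‖ ^ 2 ≤ D ^ 2 := by
  have hpar := parallelogram_law_with_norm ℝ x y
  have hadd_sq : ‖x + y‖ ^ 2 ≤ D ^ 2 := pow_le_pow_left₀ (norm_nonneg _) hadd 2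
  have hsub_sq : ‖x - y‖ ^ 2 ≤ D ^ 2 := pow_le_pow_left₀ (norm_nonneg _) hsub 2
  linarith

theorem sq_dist_add_sq_dist_le_sq_diam_add {E : Type*} [SeminormedAddCommGroup E]
    [InnerProductSpace ℝ E] {A B : Set E} (hAB : Bornology.IsBounded (A + B))
    {a a' b b' : E} (ha : a ∈ A) (ha' : a' ∈ A) (hb : b ∈ B) (hb' : b' ∈ B) :
    dist a a' ^ 2 + dist b b' ^ 2 ≤ diam (A + B) ^ 2 := by
  have hadd : ‖(a - a') + (b - b')‖ ≤ diam (A + B) := by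
    have h := dist_le_diam_of_mem hAB (Set.add_mem_add ha hb) (Set.add_mem_add ha' hb')
    rwa [dist_eq_norm, add_sub_add_comm] at h
  have hsub : ‖(a - a') - (b - b')‖ ≤ diam (A + B) := by
    have h := dist_le_diam_of_mem hAB (Set.add_mem_add ha hb') (Set.add_mem_add ha' hb)
    rwa [dist_eq_norm, show a + b' - (a' + b) = (a - a') - (b - b') by abel] at h
  simpa only [dist_eq_norm] using sq_norm_add_sq_norm_le_of_norm_add_le_of_norm_sub_le hadd hsub

/-- For nonempty bounded sets `A, B ⊆ ℝ^d`,
`diam(A ⊕ B)² ≥ diam(A)² + diam(B)²` (Euclidean diameter, Minkowski sum). -/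
theorem sq_diam_minkowski_sum_ge (d : ℕ) (A B : Set (EuclideanSpace ℝ (Fin d)))
    (hA : A.Nonempty) (hB : B.Nonempty)
    (hAb : Bornology.IsBounded A) (hBb : Bornology.IsBounded B) :
    Metric.diam A ^ 2 + Metric.diam B ^ 2 ≤ Metric.diam (A + B) ^ 2 :=
  sq_diam_add_sq_diam_le_of_forall_sq_dist_add_le hA hB fun _ ha _ ha' _ hb _ hb' =>
    sq_dist_add_sq_dist_le_sq_diam_add (hAb.add hBb) ha ha' hb hb'
end

section
/- General quantitative Helly theorem via Minkowski parametrization: Let 𝓒 be a family of convex sets in ℝ^d admitting a surjective map D : ℝ^l → 𝓒 with D(λa + (1-λ)b) = λD(a) ⊕ (1-λ)D(b) for all a, b ∈ ℝ^l and λ ∈ [0,1]. Let f : 𝓒 → ℝ satisfy f(λA ⊕ (1-λ)B) ≥ min(f(A), f(B)). If 𝓕 is a finite family of convex sets in ℝ^d such that every at most l+1 members of 𝓕 have intersection containing some K ∈ 𝓒 with f(K) ≥ 1, then ∩𝓕 contains some K ∈ 𝓒 with f(K) ≥ 1. -/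
open Pointwise

/-! Lift each `S ∈ F` to `{x | D x ⊆ S ∧ 1 ≤ f (D x)} ⊆ ℝ^l`. The Minkowski-linearity of `D`
turns convexity of `S` and min-concavity of `f` into convexity of the lift, the hypothesis on
`≤ l + 1` members says exactly that any `l + 1` lifts meet, and a point in the intersection of all
lifts, given by Helly's theorem in `ℝ^l`, is a parameter `x` with `D x` as required. -/

section MinkowskiLinear

variable {𝕜 E V : Type*} [Field 𝕜] [LinearOrder 𝕜] [IsStrictOrderedRing 𝕜]
  [AddCommGroup E] [Module 𝕜 E] [AddCommGroup V] [Module 𝕜 V] {D : V → Set E}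

theorem convex_setOf_subset_of_minkowski_linear
    (hD : ∀ a b : V, ∀ t ∈ Set.Icc (0 : 𝕜) 1, D (t • a + (1 - t) • b) = t • D a + (1 - t) • D b)
    {S : Set E} (hS : Convex 𝕜 S) : Convex 𝕜 {x | D x ⊆ S} := by
  intro a ha b hb s t hs ht hst
  obtain rfl : t = 1 - s := by linear_combination hst
  rw [Set.mem_ofPred_eq, hD a b s ⟨hs, by linarith⟩]
  exact (Set.add_subset_add (Set.smul_set_mono ha) (Set.smul_set_mono hb)).trans
    (hS.set_combo_subset hs ht hst)

theorem convex_setOf_le_of_minkowski_linear {β : Type*} [LinearOrder β]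
    (hD : ∀ a b : V, ∀ t ∈ Set.Icc (0 : 𝕜) 1, D (t • a + (1 - t) • b) = t • D a + (1 - t) • D b)
    {f : Set E → β}
    (hf : ∀ A ∈ Set.range D, ∀ B ∈ Set.range D, ∀ t ∈ Set.Icc (0 : 𝕜) 1,
      min (f A) (f B) ≤ f (t • A + (1 - t) • B))
    (c : β) : Convex 𝕜 {x | c ≤ f (D x)} := by
  intro a ha b hb s t hs ht hst
  obtain rfl : t = 1 - s := by linear_combination hst
  have hs1 : s ∈ Set.Icc (0 : 𝕜) 1 := ⟨hs, by linarith⟩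
  rw [Set.mem_ofPred_eq, hD a b s hs1]
  exact (le_min ha hb).trans (hf _ ⟨a, rfl⟩ _ ⟨b, rfl⟩ s hs1)

end MinkowskiLinear

theorem helly_minkowski_parametrization_general (d l : ℕ)
    (𝓒 : Set (Set (Fin d → ℝ)))
    (D : (Fin l → ℝ) → Set (Fin d → ℝ)) (hD : Set.range D = 𝓒)
    (hDcombo : ∀ a b : Fin l → ℝ, ∀ lam ∈ Set.Icc (0 : ℝ) 1,
      D (lam • a + (1 - lam) • b) = lam • D a + (1 - lam) • D b)
    (f : Set (Fin d → ℝ) → ℝ)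
    (hf : ∀ A ∈ 𝓒, ∀ B ∈ 𝓒, ∀ lam ∈ Set.Icc (0 : ℝ) 1,
      min (f A) (f B) ≤ f (lam • A + (1 - lam) • B))
    (F : Finset (Set (Fin d → ℝ))) (hF : ∀ S ∈ F, Convex ℝ S)
    (h : ∀ G ⊆ F, G.card ≤ l + 1 →
      ∃ K ∈ 𝓒, 1 ≤ f K ∧ K ⊆ ⋂₀ (G : Set (Set (Fin d → ℝ)))) :
    ∃ K ∈ 𝓒, 1 ≤ f K ∧ K ⊆ ⋂₀ (F : Set (Set (Fin d → ℝ))) := by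
  subst hD
  rcases F.eq_empty_or_nonempty with rfl | ⟨S₀, hS₀⟩
  · simpa using h ∅ le_rfl (by simp)
  let lift (S : Set (Fin d → ℝ)) : Set (Fin l → ℝ) := {x | D x ⊆ S} ∩ {x | 1 ≤ f (D x)}
  have lift_convex (S : Set (Fin d → ℝ)) (hS : S ∈ F) : Convex ℝ (lift S) :=
    (convex_setOf_subset_of_minkowski_linear hDcombo (hF S hS)).inter
      (convex_setOf_le_of_minkowski_linear hDcombo hf 1)
  have lift_inter {G : Finset (Set (Fin d → ℝ))} (hG : G ⊆ F)
      (hcard : G.card ≤ Module.finrank ℝ (Fin l → ℝ) + 1) : (⋂ S ∈ G, lift S).Nonempty := by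
    rw [Module.finrank_fin_fun] at hcard
    obtain ⟨_, ⟨x, rfl⟩, hfx, hxG⟩ := h G hG hcard
    exact ⟨x, Set.mem_iInter₂.2 fun S hS => ⟨hxG.trans (Set.sInter_subset_of_mem hS), hfx⟩⟩
  obtain ⟨x, hx⟩ := Convex.helly_theorem' lift_convex fun G hG => lift_inter hG
  rw [Set.mem_iInter₂] at hx
  exact ⟨D x, ⟨x, rfl⟩, (hx S₀ hS₀).2, Set.subset_sInter fun S hS => (hx S hS).1⟩

/-- General quantitative Helly theorem via a Minkowski
parametrization `D : ℝ^l → 𝓒` and a min-concave function `f`. -/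
theorem helly_minkowski_parametrization (d l : ℕ)
    (𝓒 : Set (Set (Fin d → ℝ))) (h𝓒 : ∀ C ∈ 𝓒, Convex ℝ C)
    (D : (Fin l → ℝ) → Set (Fin d → ℝ)) (hD : Set.range D = 𝓒)
    (hDcombo : ∀ a b : Fin l → ℝ, ∀ lam ∈ Set.Icc (0 : ℝ) 1,
      D (lam • a + (1 - lam) • b) = lam • D a + (1 - lam) • D b)
    (f : Set (Fin d → ℝ) → ℝ)
    (hf : ∀ A ∈ 𝓒, ∀ B ∈ 𝓒, ∀ lam ∈ Set.Icc (0 : ℝ) 1,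
      min (f A) (f B) ≤ f (lam • A + (1 - lam) • B))
    (F : Finset (Set (Fin d → ℝ))) (hF : ∀ S ∈ F, Convex ℝ S)
    (h : ∀ G ⊆ F, G.card ≤ l + 1 →
      ∃ K ∈ 𝓒, 1 ≤ f K ∧ K ⊆ ⋂₀ (G : Set (Set (Fin d → ℝ)))) :
    ∃ K ∈ 𝓒, 1 ≤ f K ∧ K ⊆ ⋂₀ (F : Set (Set (Fin d → ℝ))) :=
  helly_minkowski_parametrization_general d l 𝓒 D hD hDcombo f hf F hF h
end

section
/- Helly theorem for simultaneous approximation: Let ε > 0, let 𝓒 be a family of convex sets in ℝ^d with a Minkowski parametrization in ℝ^l, and let 𝓕 be a finite family of convex sets in ℝ^d. Suppose for every subfamily 𝓕' ⊆ 𝓕 of at most l + d + 1 sets there exist A ∈ 𝓒 and a ∈ ℝ^d with a + A ⊆ K ⊆ a + (1+ε)A for all K ∈ 𝓕'. Then there exist A ∈ 𝓒 and a ∈ ℝ^d with a + A ⊆ K ⊆ a + (1+ε)A for all K ∈ 𝓕. -/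
open Pointwise

/-!
The pairs `(x, a) ∈ ℝ^l × ℝ^d` for which `a + D x` is an `ε`-approximation of a convex set `K`
form a convex subset of `ℝ^(l+d)`: the Minkowski parametrization turns a convex combination of
parameters into the same convex combination of the sets, and both inclusions survive such
combinations. The theorem is therefore Helly's theorem in dimension `l + d`, applied to these
parameter sets, one for each `K ∈ 𝓕`.
-/

section MinkowskiParametrization

variable {P V : Type*} [AddCommGroup P] [Module ℝ P] [AddCommGroup V] [Module ℝ V]

def IsMinkowskiParametrization (D : P → Set V) : Prop :=
  ∀ a b : P, ∀ lam ∈ Set.Icc (0 : ℝ) 1,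
    D (lam • a + (1 - lam) • b) = lam • D a + (1 - lam) • D b

def approximationParameters (D : P → Set V) (t : ℝ) (K : Set V) : Set (P × V) :=
  {p | p.2 +ᵥ D p.1 ⊆ K ∧ K ⊆ p.2 +ᵥ t • D p.1}

variable {D : P → Set V}

theorem IsMinkowskiParametrization.convex_setOf_vadd_subset (hD : IsMinkowskiParametrization D)
    {K : Set V} (hK : Convex ℝ K) : Convex ℝ {p : P × V | p.2 +ᵥ D p.1 ⊆ K} := by
  intro p hp q hq μ ν hμ hν hμν
  obtain rfl : ν = 1 - μ := by linarith
  rintro _ ⟨w, hw, rfl⟩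
  rw [Prod.fst_add, Prod.smul_fst, Prod.smul_fst, hD _ _ μ ⟨hμ, by linarith⟩] at hw
  obtain ⟨_, ⟨u, hu, rfl⟩, _, ⟨v, hv, rfl⟩, rfl⟩ := hw
  have hpu : p.2 + u ∈ K := hp ⟨u, hu, rfl⟩
  have hqv : q.2 + v ∈ K := hq ⟨v, hv, rfl⟩
  convert hK hpu hqv hμ hν hμν using 1
  simp only [vadd_eq_add, Prod.snd_add, Prod.smul_snd]
  module

theorem IsMinkowskiParametrization.convex_setOf_subset_vadd_smul
    (hD : IsMinkowskiParametrization D) (K : Set V) (t : ℝ) :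
    Convex ℝ {p : P × V | K ⊆ p.2 +ᵥ t • D p.1} := by
  intro p hp q hq μ ν hμ hν hμν
  obtain rfl : ν = 1 - μ := by linarith
  intro z hz
  obtain ⟨_, ⟨u, hu, rfl⟩, hzu⟩ := hp hz
  obtain ⟨_, ⟨v, hv, rfl⟩, hzv⟩ := hq hz
  simp only [Prod.snd_add, Prod.fst_add, Prod.smul_fst, Prod.smul_snd]
  rw [hD _ _ μ ⟨hμ, by linarith⟩]
  refine ⟨t • (μ • u + (1 - μ) • v), ⟨_, Set.add_mem_add ⟨u, hu, rfl⟩ ⟨v, hv, rfl⟩, rfl⟩, ?_⟩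
  simp only [vadd_eq_add] at hzu hzv ⊢
  calc μ • p.2 + (1 - μ) • q.2 + t • (μ • u + (1 - μ) • v)
      = μ • (p.2 + t • u) + (1 - μ) • (q.2 + t • v) := by module
    _ = μ • z + (1 - μ) • z := by rw [hzu, hzv]
    _ = z := Convex.combo_self (add_sub_cancel μ 1) z

theorem IsMinkowskiParametrization.convex_approximationParameters
    (hD : IsMinkowskiParametrization D) {K : Set V} (hK : Convex ℝ K) (t : ℝ) :
    Convex ℝ (approximationParameters D t K) :=
  (hD.convex_setOf_vadd_subset hK).inter (hD.convex_setOf_subset_vadd_smul K t)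

end MinkowskiParametrization

theorem helly_simultaneous_approximation_general (d l : ℕ) (ε : ℝ)
    (𝓒 : Set (Set (Fin d → ℝ)))
    (D : (Fin l → ℝ) → Set (Fin d → ℝ)) (hD : Set.range D = 𝓒)
    (hDcombo : ∀ a b : Fin l → ℝ, ∀ lam ∈ Set.Icc (0 : ℝ) 1,
      D (lam • a + (1 - lam) • b) = lam • D a + (1 - lam) • D b)
    (F : Finset (Set (Fin d → ℝ))) (hF : ∀ S ∈ F, Convex ℝ S)
    (h : ∀ G ⊆ F, G.card ≤ l + d + 1 →
      ∃ A ∈ 𝓒, ∃ a : Fin d → ℝ, ∀ K ∈ G,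
        a +ᵥ A ⊆ K ∧ K ⊆ a +ᵥ (1 + ε) • A) :
    ∃ A ∈ 𝓒, ∃ a : Fin d → ℝ, ∀ K ∈ F,
      a +ᵥ A ⊆ K ∧ K ⊆ a +ᵥ (1 + ε) • A := by
  subst hD
  have hdim : Module.finrank ℝ ((Fin l → ℝ) × (Fin d → ℝ)) + 1 = l + d + 1 := by simp
  obtain ⟨⟨x, a⟩, hxa⟩ : (⋂ K ∈ F, approximationParameters D (1 + ε) K).Nonempty := by
    have hconvex : ∀ K ∈ F, Convex ℝ (approximationParameters D (1 + ε) K) := fun K hK =>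
      IsMinkowskiParametrization.convex_approximationParameters hDcombo (hF K hK) _
    refine Convex.helly_theorem' hconvex fun G hG hG_card => ?_
    obtain ⟨_, ⟨x, rfl⟩, a, hxa⟩ := h G hG (hdim ▸ hG_card)
    exact ⟨(x, a), Set.mem_iInter₂.2 hxa⟩
  exact ⟨D x, ⟨x, rfl⟩, a, Set.mem_iInter₂.1 hxa⟩

/-- Helly theorem for simultaneous `ε`-approximation by translates of
members of a family `𝓒` with a Minkowski parametrization in `ℝ^l`. -/
theorem helly_simultaneous_approximation (d l : ℕ) (ε : ℝ) (hε : 0 < ε)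
    (𝓒 : Set (Set (Fin d → ℝ))) (h𝓒 : ∀ C ∈ 𝓒, Convex ℝ C)
    (D : (Fin l → ℝ) → Set (Fin d → ℝ)) (hD : Set.range D = 𝓒)
    (hDcombo : ∀ a b : Fin l → ℝ, ∀ lam ∈ Set.Icc (0 : ℝ) 1,
      D (lam • a + (1 - lam) • b) = lam • D a + (1 - lam) • D b)
    (F : Finset (Set (Fin d → ℝ))) (hF : ∀ S ∈ F, Convex ℝ S)
    (h : ∀ G ⊆ F, G.card ≤ l + d + 1 →
      ∃ A ∈ 𝓒, ∃ a : Fin d → ℝ, ∀ K ∈ G,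
        a +ᵥ A ⊆ K ∧ K ⊆ a +ᵥ (1 + ε) • A) :
    ∃ A ∈ 𝓒, ∃ a : Fin d → ℝ, ∀ K ∈ F,
      a +ᵥ A ⊆ K ∧ K ⊆ a +ᵥ (1 + ε) • A :=
  helly_simultaneous_approximation_general d l ε 𝓒 D hD hDcombo F hF h
end

section
/- Helly theorem for ellipsoids by trace: Let 𝓕 be a finite family of convex sets in ℝ^d. If the intersection of every d(d+3)/2 or fewer members of 𝓕 contains an ellipsoid whose principal axis lengths sum to at least one, then ∩𝓕 contains an ellipsoid whose principal axis lengths sum to at least one. -/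
open Pointwise

/-- The linear action of a `d × d` matrix on `EuclideanSpace ℝ (Fin d)`. -/
noncomputable def matApply {d : ℕ} (A : Matrix (Fin d) (Fin d) ℝ)
    (x : EuclideanSpace ℝ (Fin d)) : EuclideanSpace ℝ (Fin d) :=
  (EuclideanSpace.equiv (Fin d) ℝ).symm (A.mulVec (EuclideanSpace.equiv (Fin d) ℝ x))

/-- An ellipsoid in `ℝ^d` whose principal axis lengths sum to at least one:
`a + A·B_d` with `A` symmetric positive definite and `2·tr(A) ≥ 1`. -/
def IsEllipsoidAxisSumGeOne {d : ℕ} (E : Set (EuclideanSpace ℝ (Fin d))) : Prop :=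
  ∃ (a : EuclideanSpace ℝ (Fin d)) (A : Matrix (Fin d) (Fin d) ℝ),
    A.PosDef ∧ 1 ≤ 2 * A.trace ∧
    E = (fun x => a + matApply A x) ''
      Metric.closedBall (0 : EuclideanSpace ℝ (Fin d)) 1


/-!
An ellipsoid `a + A·B_d` lies in a convex set `S` for a convex set of parameters `(a, A)`, since
the point `a + A x` depends linearly on `(a, A)` and positive definite matrices form a convex
set. Shrinking `A` shrinks the ellipsoid, so the trace may be normalized to `1/2`; the pairs
`(a, A)` with `A` symmetric of trace `1/2` form an affine space of dimension
`d + d(d+1)/2 - 1 = d(d+3)/2 - 1`, and Helly's theorem in that space gives the result.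
-/
open Module Set

local notation "𝔼" d:max => EuclideanSpace ℝ (Fin d)

local notation "𝕄" d:max => Matrix (Fin d) (Fin d) ℝ

theorem Convex.helly_theorem_affineMap {ι 𝕜 V W : Type*} [Field 𝕜] [LinearOrder 𝕜]
    [IsStrictOrderedRing 𝕜] [AddCommGroup V] [Module 𝕜 V] [FiniteDimensional 𝕜 V]
    [AddCommGroup W] [Module 𝕜 W] (φ : V →ᵃ[𝕜] W) {K : ι → Set W} {s : Finset ι}
    (h_convex : ∀ i ∈ s, Convex 𝕜 (K i))
    (h_inter : ∀ I ⊆ s, I.card ≤ finrank 𝕜 V + 1 → ∃ v, ∀ i ∈ I, φ v ∈ K i) :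
    ∃ v, ∀ i ∈ s, φ v ∈ K i := by
  have := Convex.helly_theorem' (F := fun i => φ ⁻¹' K i)
    (fun i hi => (h_convex i hi).affine_preimage φ) fun I hI hcard => by
      simpa [Set.Nonempty] using h_inter I hI hcard
  simpa [Set.Nonempty] using this

namespace Matrix

theorem convex_setOf_posDef {n : Type*} [Fintype n] :
    Convex ℝ {A : Matrix n n ℝ | A.PosDef} := by
  intro A hA B hB t u ht hu htu
  rcases ht.eq_or_lt with rfl | ht
  · simp_all
  · exact (hA.smul ht).add_posSemidef (hB.posSemidef.smul hu)

theorem PosDef.isSymm {n : Type*} [Fintype n] {A : Matrix n n ℝ} (hA : A.PosDef) : A.IsSymm :=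
  isHermitian_iff_isSymm.mp hA.isHermitian

variable {n R : Type*} [CommSemiring R]

def ofSym2 : (Sym2 n → R) →ₗ[R] Matrix n n R where
  toFun s := of fun i j => s s(i, j)
  map_add' _ _ := rfl
  map_smul' _ _ := rfl

@[simp]
theorem ofSym2_apply (s : Sym2 n → R) (i j : n) : ofSym2 s i j = s s(i, j) := rfl

theorem IsSymm.exists_ofSym2_eq {A : Matrix n n R} (hA : A.IsSymm) : ∃ s, ofSym2 s = A :=
  ⟨Sym2.lift ⟨A, fun i j => (hA.apply i j).symm⟩, rfl⟩

theorem trace_ofSym2_one [Fintype n] : (ofSym2 (1 : Sym2 n → R)).trace = Fintype.card n := by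
  simp [trace]

end Matrix

section EllipsoidParams

variable {d : ℕ}

theorem matApply_add_left (A B : 𝕄 d) (x : 𝔼 d) :
    matApply (A + B) x = matApply A x + matApply B x := by
  simp [matApply, Matrix.add_mulVec]

theorem matApply_smul_left (t : ℝ) (A : 𝕄 d) (x : 𝔼 d) :
    matApply (t • A) x = t • matApply A x := by
  simp [matApply, Matrix.smul_mulVec]

theorem matApply_smul_right (t : ℝ) (A : 𝕄 d) (x : 𝔼 d) :
    matApply A (t • x) = t • matApply A x := by
  simp [matApply, Matrix.mulVec_smul]

def ellipsoidParams (S : Set (𝔼 d)) : Set (𝔼 d × 𝕄 d) :=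
  {p | p.2.PosDef ∧ (fun x => p.1 + matApply p.2 x) '' Metric.closedBall 0 1 ⊆ S}

theorem ellipsoidParams_mono {S T : Set (𝔼 d)} (h : S ⊆ T) :
    ellipsoidParams S ⊆ ellipsoidParams T :=
  fun _ hp => ⟨hp.1, hp.2.trans h⟩

theorem mem_ellipsoidParams_sInter {𝒮 : Set (Set (𝔼 d))} (h𝒮 : 𝒮.Nonempty) {p : 𝔼 d × 𝕄 d} :
    p ∈ ellipsoidParams (⋂₀ 𝒮) ↔ ∀ S ∈ 𝒮, p ∈ ellipsoidParams S := by
  refine ⟨fun hp S hS => ellipsoidParams_mono (sInter_subset_of_mem hS) hp, fun hp => ?_⟩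
  obtain ⟨S₀, hS₀⟩ := h𝒮
  exact ⟨(hp S₀ hS₀).1, subset_sInter fun S hS => (hp S hS).2⟩

theorem Convex.ellipsoidParams {S : Set (𝔼 d)} (hS : Convex ℝ S) :
    Convex ℝ (ellipsoidParams S) := by
  rintro p ⟨hpA, hpS⟩ q ⟨hqA, hqS⟩ t u ht hu htu
  refine ⟨Matrix.convex_setOf_posDef hpA hqA ht hu htu, ?_⟩
  rintro _ ⟨x, hx, rfl⟩
  have hcomb : (t • p + u • q).1 + matApply (t • p + u • q).2 x =
      t • (p.1 + matApply p.2 x) + u • (q.1 + matApply q.2 x) := by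
    simp only [Prod.fst_add, Prod.snd_add, Prod.smul_fst, Prod.smul_snd, matApply_add_left,
      matApply_smul_left]
    module
  dsimp only
  rw [hcomb]
  exact hS (hpS ⟨x, hx, rfl⟩) (hqS ⟨x, hx, rfl⟩) ht hu htu

theorem exists_isEllipsoidAxisSumGeOne_subset_iff {S : Set (𝔼 d)} :
    (∃ E, IsEllipsoidAxisSumGeOne E ∧ E ⊆ S) ↔ ∃ p ∈ ellipsoidParams S, p.2.trace = 1 / 2 := by
  constructor
  · rintro ⟨_, ⟨a, A, hA, htr, rfl⟩, hS⟩
    have htr₀ : 0 < A.trace := by linarith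
    set t := (2 * A.trace)⁻¹
    have ht₀ : 0 < t := by positivity
    have ht₁ : t ≤ 1 := inv_le_one_of_one_le₀ htr
    refine ⟨(a, t • A), ⟨hA.smul ht₀, ?_⟩, ?_⟩
    · rintro _ ⟨x, hx, rfl⟩
      have htx : t • x ∈ Metric.closedBall 0 1 := by
        rw [mem_closedBall_zero_iff] at hx ⊢
        rw [norm_smul, Real.norm_of_nonneg ht₀.le]
        exact mul_le_one₀ ht₁ (norm_nonneg x) hx
      exact hS ⟨t • x, htx, by simp only [matApply_smul_left, matApply_smul_right]⟩
    · simp only [Matrix.trace_smul, smul_eq_mul, t]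
      field_simp
  · rintro ⟨⟨a, A⟩, ⟨hA, hS⟩, htr⟩
    exact ⟨_, ⟨a, A, hA, by simp [htr], rfl⟩, hS⟩

end EllipsoidParams

section SymTraceChart

variable (d : ℕ)

def symTraceForm : 𝔼 d × (Sym2 (Fin d) → ℝ) →ₗ[ℝ] ℝ :=
  Matrix.traceLinearMap (Fin d) ℝ ℝ ∘ₗ Matrix.ofSym2 ∘ₗ LinearMap.snd ℝ _ _

theorem finrank_ker_symTraceForm_add_one (hd : 0 < d) :
    finrank ℝ (LinearMap.ker (symTraceForm d)) + 1 = d * (d + 3) / 2 := by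
  have hne : symTraceForm d ≠ 0 := by
    intro h
    have := LinearMap.congr_fun h (0, 1)
    simp [symTraceForm, Matrix.trace_ofSym2_one] at this
    omega
  rw [Module.Dual.finrank_ker_add_one_of_ne_zero hne, finrank_prod, finrank_euclideanSpace_fin,
    finrank_fintype_fun_eq_card, Sym2.card, Fintype.card_fin, Nat.choose_two_right,
    Nat.add_sub_cancel, show d * (d + 3) = (d + 1) * d + d * 2 by ring,
    Nat.add_mul_div_right _ _ two_pos, add_comm]

variable {d}

/-- Affine coordinates on the pairs `(a, A)` with `A` symmetric and `tr A = tr A₀`. -/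
def symTraceChart (A₀ : 𝕄 d) : LinearMap.ker (symTraceForm d) →ᵃ[ℝ] 𝔼 d × 𝕄 d :=
  (LinearMap.prodMap LinearMap.id Matrix.ofSym2 ∘ₗ
      (LinearMap.ker (symTraceForm d)).subtype).toAffineMap +
    AffineMap.const ℝ _ (0, A₀)

@[simp]
theorem symTraceChart_apply (A₀ : 𝕄 d) (v : LinearMap.ker (symTraceForm d)) :
    symTraceChart A₀ v = (v.1.1, Matrix.ofSym2 v.1.2 + A₀) := by
  simp [symTraceChart]

theorem trace_symTraceChart (A₀ : 𝕄 d) (v : LinearMap.ker (symTraceForm d)) :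
    (symTraceChart A₀ v).2.trace = A₀.trace := by
  have hv : (Matrix.ofSym2 v.1.2).trace = 0 := v.2
  simp [Matrix.trace_add, hv]

theorem mem_range_symTraceChart {A₀ : 𝕄 d} (hA₀ : A₀.IsSymm) {p : 𝔼 d × 𝕄 d} (hp : p.2.IsSymm)
    (htr : p.2.trace = A₀.trace) : p ∈ range (symTraceChart A₀) := by
  obtain ⟨s, hs⟩ := (hp.sub hA₀).exists_ofSym2_eq
  refine ⟨⟨(p.1, s), ?_⟩, ?_⟩
  · simp [symTraceForm, hs, htr]
  · simp [hs]

end SymTraceChart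

/-- Helly theorem for ellipsoids by trace: if the intersection of every
`d(d+3)/2` or fewer members of a finite family of convex sets contains an ellipsoid whose
principal axis lengths sum to at least one, then so does the intersection of the whole
family. -/
theorem helly_ellipsoids_trace (d : ℕ)
    (F : Finset (Set (EuclideanSpace ℝ (Fin d)))) (hF : ∀ S ∈ F, Convex ℝ S)
    (h : ∀ G ⊆ F, G.card ≤ d * (d + 3) / 2 →
      ∃ E, IsEllipsoidAxisSumGeOne E ∧ E ⊆ ⋂₀ (G : Set (Set (EuclideanSpace ℝ (Fin d))))) :
    ∃ E, IsEllipsoidAxisSumGeOne E ∧ E ⊆ ⋂₀ (F : Set (Set (EuclideanSpace ℝ (Fin d)))) := by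
  rcases F.eq_empty_or_nonempty with rfl | hFne
  · exact h ∅ subset_rfl (Nat.zero_le _)
  obtain ⟨p₀, hp₀, htr₀⟩ :=
    exists_isEllipsoidAxisSumGeOne_subset_iff.mp (h ∅ (Finset.empty_subset F) (Nat.zero_le _))
  have hd : 0 < d := Nat.pos_of_ne_zero fun hd => by subst hd; norm_num at htr₀
  obtain ⟨v, hv⟩ := Convex.helly_theorem_affineMap (symTraceChart p₀.2) (K := ellipsoidParams)
    (fun S hS => (hF S hS).ellipsoidParams) fun I hI hcard => by
      rw [finrank_ker_symTraceForm_add_one d hd] at hcard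
      obtain ⟨p, hp, htr⟩ := exists_isEllipsoidAxisSumGeOne_subset_iff.mp (h I hI hcard)
      obtain ⟨v, rfl⟩ := mem_range_symTraceChart hp₀.1.isSymm hp.1.isSymm (htr.trans htr₀.symm)
      exact ⟨v, fun S hS => (mem_ellipsoidParams_sInter ⟨S, hS⟩).mp hp S hS⟩
  refine exists_isEllipsoidAxisSumGeOne_subset_iff.mpr ⟨_, ?_, (trace_symTraceChart _ v).trans htr₀⟩
  exact (mem_ellipsoidParams_sInter (by simpa using hFne)).mpr hv
end

section
/- Contractibility of affine-image witness sets: Let K ⊆ ℝ^d be an open set of volume one, M ⊆ ℝ^d be a convex set, and let 𝒦 = {(a, A) : a ∈ ℝ^d, A symmetric positive definite with det A = 1}. Then the set S = {(a, A) ∈ 𝒦 : a + A·K ⊆ M} is either empty or contractible. -/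
/-!
Let `T` be the set of pairs `(a, A)` with `A` positive definite, `det A ≥ 1` and `a + A·K ⊆ M`.
It is convex, because `M` is convex and the determinant is log-concave on positive definite
matrices, so it is contractible as soon as it is nonempty. The witness set `S ⊆ T` is a retract
of `T`: pick `x₀ ∈ K` (possible since `K` has positive volume) and send `(a, A)` to the pair whose
affine map is that of `(a, A)` followed by the homothety of ratio `(det A)^{-1/d} ≤ 1` centred at
`a + A x₀`; by convexity of `M` the image of `K` stays inside `M`.
-/

open MeasureTheory Matrix

namespace Matrix

variable {n : Type*}

theorem PosDef.smul_add_smul {A B : Matrix n n ℝ} (hA : A.PosDef) (hB : B.PosDef) {a b : ℝ}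
    (ha : 0 ≤ a) (hb : 0 ≤ b) (hab : a + b = 1) : (a • A + b • B).PosDef := by
  rcases ha.eq_or_lt with rfl | ha
  · obtain rfl : b = 1 := by simpa using hab
    simpa using hB
  · exact (hA.smul ha).add_posSemidef (hB.posSemidef.smul hb)

variable [Fintype n] [DecidableEq n]

theorem IsHermitian.det_cfc {𝕜 : Type*} [RCLike 𝕜] {A : Matrix n n 𝕜} (hA : A.IsHermitian)
    (f : ℝ → ℝ) : (cfc f A).det = ∏ i, (f (hA.eigenvalues i) : 𝕜) := by
  rw [hA.cfc_eq, IsHermitian.cfc, Unitary.conjStarAlgAut_apply, det_mul_right_comm,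
    Unitary.mul_star_self_of_mem hA.eigenvectorUnitary.2]
  simp [det_diagonal]

theorem IsHermitian.smul_one_add_smul_eq_cfc {𝕜 : Type*} [RCLike 𝕜] {X : Matrix n n 𝕜}
    (hX : X.IsHermitian) (a b : ℝ) :
    a • (1 : Matrix n n 𝕜) + b • X = cfc (fun t => a + b * t) X := by
  rw [cfc_add _ _ _, cfc_const_mul _ _ _, cfc_id' ℝ X, cfc_const a X,
    Algebra.algebraMap_eq_smul_one]

theorem PosDef.det_rpow_le_det_smul_one_add_smul {X : Matrix n n ℝ} (hX : X.PosDef)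
    {a b : ℝ} (ha : 0 ≤ a) (hb : 0 ≤ b) (hab : a + b = 1) :
    X.det ^ b ≤ (a • (1 : Matrix n n ℝ) + b • X).det := by
  have hμ := hX.eigenvalues_pos
  rw [hX.1.smul_one_add_smul_eq_cfc, hX.1.det_cfc, hX.1.det_eq_prod_eigenvalues]
  simp only [RCLike.ofReal_real_eq_id, id]
  rw [← Real.finsetProd_rpow _ _ fun i _ => (hμ i).le]
  gcongr with i
  · exact fun i _ => Real.rpow_nonneg (hμ i).le _
  · simpa using Real.geom_mean_le_arith_mean2_weighted ha hb zero_le_one (hμ i).le hab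

open scoped MatrixOrder in
/-- Writing `A = Cᴴ C` reduces this to the case `A = 1`, which is weighted AM-GM applied to each
eigenvalue of `Cᴴ⁻¹ B C⁻¹`. -/
theorem PosDef.det_rpow_mul_det_rpow_le_det_smul_add_smul {A B : Matrix n n ℝ}
    (hA : A.PosDef) (hB : B.PosDef) {a b : ℝ} (ha : 0 ≤ a) (hb : 0 ≤ b) (hab : a + b = 1) :
    A.det ^ a * B.det ^ b ≤ (a • A + b • B).det := by
  obtain ⟨C, hC, rfl⟩ := CStarAlgebra.isStrictlyPositive_iff_eq_star_mul_self.mp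
    hA.isStrictlyPositive
  obtain ⟨D, hCD, hDC⟩ : ∃ D : Matrix n n ℝ, C * D = 1 ∧ D * C = 1 :=
    ⟨↑hC.unit⁻¹, hC.mul_val_inv, hC.val_inv_mul⟩
  set X := star D * B * D
  have hX : X.PosDef := (IsUnit.posDef_star_left_conjugate_iff (.of_mul_eq_one_right C hCD)).2 hB
  have hBX : B = star C * X * C := by
    simp only [X, ← mul_assoc, ← star_mul, hDC, star_one, one_mul]
    simp [mul_assoc, hDC]
  have hconj : a • (star C * C) + b • B = star C * (a • 1 + b • X) * C := by
    rw [hBX, mul_add, add_mul, mul_smul_comm, mul_smul_comm, smul_mul_assoc, smul_mul_assoc,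
      mul_one]
  have hδ := hA.det_pos
  set δ := (star C * C).det
  have hdet : ∀ Y : Matrix n n ℝ, (star C * Y * C).det = δ * Y.det := by
    intro Y
    simp only [δ, det_mul]
    ring
  rw [hconj, hdet, hBX, hdet, Real.mul_rpow hδ.le hX.det_pos.le, ← mul_assoc,
    ← Real.rpow_add hδ, hab, Real.rpow_one]
  exact mul_le_mul_of_nonneg_left (hX.det_rpow_le_det_smul_one_add_smul ha hb hab) hδ.le

theorem convex_setOf_posDef_one_le_det :
    Convex ℝ {A : Matrix n n ℝ | A.PosDef ∧ 1 ≤ A.det} := by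
  rintro A ⟨hA, hdA⟩ B ⟨hB, hdB⟩ a b ha hb hab
  refine ⟨hA.smul_add_smul hB ha hb hab, ?_⟩
  calc 1 ≤ A.det ^ a * B.det ^ b :=
        one_le_mul_of_one_le_of_one_le (Real.one_le_rpow hdA ha) (Real.one_le_rpow hdB hb)
    _ ≤ (a • A + b • B).det := hA.det_rpow_mul_det_rpow_le_det_smul_add_smul hB ha hb hab

theorem det_det_rpow_neg_inv_card_smul {A : Matrix n n ℝ} (hA : 0 < A.det) :
    (A.det ^ (-(Fintype.card n : ℝ)⁻¹) • A).det = 1 := by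
  rw [det_smul]
  rcases (Fintype.card n).eq_zero_or_pos with hn | hn
  · have := Fintype.card_eq_zero_iff.mp hn
    simp
  · rw [← Real.rpow_natCast, ← Real.rpow_mul hA.le, neg_mul,
      inv_mul_cancel₀ (by exact_mod_cast hn.ne'), Real.rpow_neg_one, inv_mul_cancel₀ hA.ne']

end Matrix

theorem ContractibleSpace.of_retraction {X Y : Type*} [TopologicalSpace X] [TopologicalSpace Y]
    [ContractibleSpace X] (i : C(Y, X)) (r : C(X, Y)) (hri : r.comp i = .id Y) :
    ContractibleSpace Y := by
  rw [contractible_iff_id_nullhomotopic, ← hri]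
  exact ((id_nullhomotopic X).comp_right r).comp_left i

section AffineImages

variable {n : Type*} [Fintype n] {K M : Set (n → ℝ)}

theorem convex_setOf_affine_image_subset (hM : Convex ℝ M) :
    Convex ℝ {p : (n → ℝ) × Matrix n n ℝ | (fun x => p.1 + p.2 *ᵥ x) '' K ⊆ M} := by
  rintro p hp q hq a b ha hb hab _ ⟨x, hx, rfl⟩
  have hcomb : (a • p + b • q).1 + (a • p + b • q).2 *ᵥ x
      = a • (p.1 + p.2 *ᵥ x) + b • (q.1 + q.2 *ᵥ x) := by
    simp only [Prod.fst_add, Prod.snd_add, Prod.smul_fst, Prod.smul_snd, add_mulVec, smul_mulVec]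
    module
  dsimp only
  rw [hcomb]
  exact hM (hp ⟨x, hx, rfl⟩) (hq ⟨x, hx, rfl⟩) ha hb hab

/-- The map `x ↦ a + (1 - r) A x₀ + r A x` is `x ↦ a + A x` followed by the homothety of ratio `r`
centred at `a + A x₀`. -/
theorem affine_image_homothety_subset (hM : Convex ℝ M) {a : n → ℝ} {A : Matrix n n ℝ}
    (hK : (fun x => a + A *ᵥ x) '' K ⊆ M) {x₀ : n → ℝ} (hx₀ : x₀ ∈ K) {r : ℝ} (hr0 : 0 ≤ r)
    (hr1 : r ≤ 1) : (fun x => (a + (1 - r) • A *ᵥ x₀) + (r • A) *ᵥ x) '' K ⊆ M := by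
  rintro _ ⟨x, hx, rfl⟩
  have hcomb : (a + (1 - r) • A *ᵥ x₀) + (r • A) *ᵥ x
      = (1 - r) • (a + A *ᵥ x₀) + r • (a + A *ᵥ x) := by
    rw [smul_mulVec]
    module
  dsimp only
  rw [hcomb]
  exact hM (hK ⟨x₀, hx₀, rfl⟩) (hK ⟨x, hx, rfl⟩) (by linarith) hr0 (by ring)

variable [DecidableEq n]

noncomputable def normalizeDet (x₀ : n → ℝ) (p : (n → ℝ) × Matrix n n ℝ) :
    (n → ℝ) × Matrix n n ℝ :=
  let r := p.2.det ^ (-(Fintype.card n : ℝ)⁻¹)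
  (p.1 + (1 - r) • p.2 *ᵥ x₀, r • p.2)

theorem normalizeDet_of_det_eq_one (x₀ : n → ℝ) {p : (n → ℝ) × Matrix n n ℝ}
    (hp : p.2.det = 1) : normalizeDet x₀ p = p := by
  simp [normalizeDet, hp]

theorem continuousOn_normalizeDet (x₀ : n → ℝ) :
    ContinuousOn (normalizeDet x₀) {p | 0 < p.2.det} := by
  have hr : ContinuousOn (fun p : (n → ℝ) × Matrix n n ℝ => p.2.det ^ (-(Fintype.card n : ℝ)⁻¹))
      {p | 0 < p.2.det} :=
    fun p hp => (continuous_snd.matrix_det.continuousAt.rpow_const (.inl hp.ne')).continuousWithinAt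
  exact (continuousOn_fst.add ((continuousOn_const.sub hr).smul
    (continuous_snd.matrix_mulVec continuous_const).continuousOn)).prodMk
    (hr.smul continuousOn_snd)

theorem normalizeDet_mem (hM : Convex ℝ M) {x₀ : n → ℝ} (hx₀ : x₀ ∈ K)
    {p : (n → ℝ) × Matrix n n ℝ} (hpos : p.2.PosDef) (hdet : 1 ≤ p.2.det)
    (hK : (fun x => p.1 + p.2 *ᵥ x) '' K ⊆ M) :
    (normalizeDet x₀ p).2.IsSymm ∧ (normalizeDet x₀ p).2.PosDef ∧ (normalizeDet x₀ p).2.det = 1 ∧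
      (fun x => (normalizeDet x₀ p).1 + (normalizeDet x₀ p).2 *ᵥ x) '' K ⊆ M := by
  have hr0 : 0 < p.2.det ^ (-(Fintype.card n : ℝ)⁻¹) := Real.rpow_pos_of_pos hpos.det_pos _
  have hrpos : (normalizeDet x₀ p).2.PosDef := hpos.smul hr0
  refine ⟨isHermitian_iff_isSymm.mp hrpos.1, hrpos, det_det_rpow_neg_inv_card_smul hpos.det_pos,
    affine_image_homothety_subset hM hK hx₀ hr0.le ?_⟩
  exact Real.rpow_le_one_of_one_le_of_nonpos hdet (by simp)

end AffineImages

theorem witness_set_empty_or_contractible_general (d : ℕ) (K M : Set (Fin d → ℝ))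
    (hKvol : volume K = 1) (hM : Convex ℝ M) :
    ({p : (Fin d → ℝ) × Matrix (Fin d) (Fin d) ℝ |
        p.2.IsSymm ∧ p.2.PosDef ∧ p.2.det = 1 ∧
        (fun x => p.1 + p.2.mulVec x) '' K ⊆ M} = ∅) ∨
      ContractibleSpace ({p : (Fin d → ℝ) × Matrix (Fin d) (Fin d) ℝ |
        p.2.IsSymm ∧ p.2.PosDef ∧ p.2.det = 1 ∧
        (fun x => p.1 + p.2.mulVec x) '' K ⊆ M} : Set _) := by
  set S := {p : (Fin d → ℝ) × Matrix (Fin d) (Fin d) ℝ |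
    p.2.IsSymm ∧ p.2.PosDef ∧ p.2.det = 1 ∧ (fun x => p.1 + p.2.mulVec x) '' K ⊆ M}
  set T := Prod.snd ⁻¹' {A : Matrix (Fin d) (Fin d) ℝ | A.PosDef ∧ 1 ≤ A.det} ∩
    {p | (fun x => p.1 + p.2 *ᵥ x) '' K ⊆ M}
  refine S.eq_empty_or_nonempty.imp id fun ⟨p₀, hp₀⟩ => ?_
  obtain ⟨x₀, hx₀⟩ : K.Nonempty := nonempty_of_measure_ne_zero (hKvol ▸ one_ne_zero)
  have hST : S ⊆ T := fun p ⟨_, hpos, hdet, hK⟩ => ⟨⟨hpos, hdet.ge⟩, hK⟩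
  have hTconvex : Convex ℝ T :=
    (convex_setOf_posDef_one_le_det.linear_preimage (LinearMap.snd ℝ _ _)).inter
      (convex_setOf_affine_image_subset hM)
  have := hTconvex.contractibleSpace ⟨p₀, hST hp₀⟩
  have hmaps : Set.MapsTo (normalizeDet x₀) T S := fun p ⟨⟨hpos, hdet⟩, hK⟩ =>
    normalizeDet_mem hM hx₀ hpos hdet hK
  refine ContractibleSpace.of_retraction ⟨Set.inclusion hST, continuous_inclusion hST⟩
    ⟨hmaps.restrict _ T S, ((continuousOn_normalizeDet x₀).mono
      fun p hp => hp.1.1.det_pos).mapsToRestrict hmaps⟩ ?_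
  ext p : 2
  exact normalizeDet_of_det_eq_one x₀ p.2.2.2.1

/-- For an open set `K ⊆ ℝ^d` of volume one and a convex `M ⊆ ℝ^d`,
the set `S = {(a, A) : A symmetric positive definite, det A = 1, a + A·K ⊆ M}`
is empty or contractible. -/
theorem witness_set_empty_or_contractible (d : ℕ) (K M : Set (Fin d → ℝ))
    (hKopen : IsOpen K) (hKvol : volume K = 1) (hM : Convex ℝ M) :
    ({p : (Fin d → ℝ) × Matrix (Fin d) (Fin d) ℝ |
        p.2.IsSymm ∧ p.2.PosDef ∧ p.2.det = 1 ∧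
        (fun x => p.1 + p.2.mulVec x) '' K ⊆ M} = ∅) ∨
      ContractibleSpace ({p : (Fin d → ℝ) × Matrix (Fin d) (Fin d) ℝ |
        p.2.IsSymm ∧ p.2.PosDef ∧ p.2.det = 1 ∧
        (fun x => p.1 + p.2.mulVec x) '' K ⊆ M} : Set _) :=
  witness_set_empty_or_contractible_general d K M hKvol hM
end

section
/- Helly for box diameter: Let 𝓕 be a finite family of convex sets in ℝ^d such that the intersection of every 2d or fewer members contains an axis-parallel box of (Euclidean) diameter at least one. Then ∩𝓕 contains an axis-parallel box of diameter at least d^{-1/2}. -/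
/-!
Parametrize a box by two opposite corners `(a, b) ∈ ℝ^d × ℝ^d`. For a convex set `S`, the corner
pairs of boxes inside `S` form a convex set, because the point of the box with coordinates
`μ ∈ [0,1]^d` depends linearly on `(a, b)`. Every box of diameter `≥ 1` contains a box with
`∑ (bᵢ - aᵢ) = 1`, so Helly's theorem on this hyperplane of dimension `2d - 1` yields a common
such box, and by Cauchy–Schwarz its diameter is at least `1 / √d`.
-/

open Pointwise

/-- An axis-parallel box in `ℝ^d`: a product of compact intervals. -/
def IsAxisParallelBox {d : ℕ} (B : Set (EuclideanSpace ℝ (Fin d))) : Prop :=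
  ∃ a b : Fin d → ℝ, (∀ i, a i ≤ b i) ∧
    B = {x : EuclideanSpace ℝ (Fin d) | ∀ i, x i ∈ Set.Icc (a i) (b i)}

open Set Module
open scoped Finset

theorem Convex.helly_theorem_on_hyperplane {ι 𝕜 E : Type*} [Field 𝕜] [LinearOrder 𝕜]
    [IsStrictOrderedRing 𝕜] [AddCommGroup E] [Module 𝕜 E] [FiniteDimensional 𝕜 E]
    {F : ι → Set E} {s : Finset ι} (φ : Module.Dual 𝕜 E)
    (h_convex : ∀ i ∈ s, Convex 𝕜 (F i))
    (h_inter : ∀ I ⊆ s, #I ≤ finrank 𝕜 E → ({x | φ x = 1} ∩ ⋂ i ∈ I, F i).Nonempty) :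
    ({x | φ x = 1} ∩ ⋂ i ∈ s, F i).Nonempty := by
  obtain ⟨x₀, hx₀ : φ x₀ = 1, -⟩ := h_inter ∅ (Finset.empty_subset s) (by simp)
  have hφ : φ ≠ 0 := by rintro rfl; simp at hx₀
  let G : ι → Set (LinearMap.ker φ) := fun i => {v | x₀ + v ∈ F i}
  have hG : ∀ i ∈ s, Convex 𝕜 (G i) := fun i hi =>
    ((h_convex i hi).translate_preimage_right x₀).linear_preimage (LinearMap.ker φ).subtype
  obtain ⟨v, hv⟩ := Convex.helly_theorem' hG fun I hI hcard => by
    rw [Module.Dual.finrank_ker_add_one_of_ne_zero hφ] at hcard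
    obtain ⟨x, hx : φ x = 1, hxI⟩ := h_inter I hI hcard
    refine ⟨⟨x - x₀, by simp [hx, hx₀]⟩, mem_iInter₂.2 fun i hi => ?_⟩
    simpa [G] using mem_iInter₂.1 hxI i hi
  exact ⟨x₀ + v, by simp [hx₀], mem_iInter₂.2 fun i hi => mem_iInter₂.1 hv i hi⟩

section

variable {ι : Type*}

def axisBox (a b : ι → ℝ) : Set (EuclideanSpace ℝ ι) := {x | ∀ i, x i ∈ uIcc (a i) (b i)}

theorem axisBox_eq_image_lineMap (a b : ι → ℝ) :
    axisBox a b = (fun μ : ι → ℝ => WithLp.toLp 2 fun i => AffineMap.lineMap (a i) (b i) (μ i)) ''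
      Set.pi univ fun _ => Icc 0 1 := by
  ext x
  simp only [axisBox, ← segment_eq_uIcc, segment_eq_image_lineMap]
  constructor
  · intro hx
    choose μ hμ hμx using hx
    exact ⟨μ, fun i _ => hμ i, by ext i; exact hμx i⟩
  · rintro ⟨μ, hμ, rfl⟩ i
    exact ⟨μ i, hμ i (mem_univ i), rfl⟩

theorem convex_setOf_axisBox_subset {S : Set (EuclideanSpace ℝ ι)} (hS : Convex ℝ S) :
    Convex ℝ {p : (ι → ℝ) × (ι → ℝ) | axisBox p.1 p.2 ⊆ S} := by
  simp only [axisBox_eq_image_lineMap, image_subset_iff]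
  intro p hp q hq t s ht hs hts μ hμ
  rw [mem_preimage]
  convert hS (hp hμ) (hq hμ) ht hs hts using 1
  ext i
  simp [AffineMap.lineMap_apply_module]
  ring

variable [Fintype ι]

theorem EuclideanSpace.dist_le_of_forall_dist_le {x y x' y' : EuclideanSpace ℝ ι}
    (h : ∀ i, dist (x i) (y i) ≤ dist (x' i) (y' i)) : dist x y ≤ dist x' y' := by
  simp only [EuclideanSpace.dist_eq]
  gcongr with i
  exact h i

theorem EuclideanSpace.dist_toLp_eq (a b : ι → ℝ) :
    dist (WithLp.toLp 2 a) (WithLp.toLp 2 b) = √(∑ i, (b i - a i) ^ 2) := by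
  simp [EuclideanSpace.dist_eq, dist_comm (a _), Real.dist_eq, sq_abs]

theorem EuclideanSpace.dist_toLp_le_sum_sub {a b : ι → ℝ} (hab : a ≤ b) :
    dist (WithLp.toLp 2 a) (WithLp.toLp 2 b) ≤ ∑ i, (b i - a i) := by
  have hnonneg : ∀ i ∈ Finset.univ, 0 ≤ b i - a i := fun i _ => sub_nonneg.2 (hab i)
  rw [EuclideanSpace.dist_toLp_eq, Real.sqrt_le_left (Finset.sum_nonneg hnonneg)]
  exact Finset.sum_sq_le_sq_sum_of_nonneg hnonneg

theorem EuclideanSpace.sum_sub_le_sqrt_card_mul_dist_toLp (a b : ι → ℝ) :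
    ∑ i, (b i - a i) ≤ √(Fintype.card ι) * dist (WithLp.toLp 2 a) (WithLp.toLp 2 b) := by
  rw [EuclideanSpace.dist_toLp_eq, ← Real.sqrt_mul (Nat.cast_nonneg _)]
  refine Real.le_sqrt_of_sq_le ?_
  simpa using sq_sum_le_card_mul_sum_sq (s := Finset.univ) (f := fun i => b i - a i)

theorem diam_axisBox (a b : ι → ℝ) :
    Metric.diam (axisBox a b) = dist (WithLp.toLp 2 a) (WithLp.toLp 2 b) := by
  have ha : WithLp.toLp 2 a ∈ axisBox a b := fun i => left_mem_uIcc
  have hb : WithLp.toLp 2 b ∈ axisBox a b := fun i => right_mem_uIcc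
  have hle : ∀ x ∈ axisBox a b, ∀ y ∈ axisBox a b,
      dist x y ≤ dist (WithLp.toLp 2 a) (WithLp.toLp 2 b) := fun x hx y hy =>
    EuclideanSpace.dist_le_of_forall_dist_le fun i => abs_sub_le_of_uIcc_subset_uIcc <|
      uIcc_comm (b i) (a i) ▸ uIcc_subset_uIcc (hy i) (hx i)
  exact le_antisymm (Metric.diam_le_of_forall_dist_le dist_nonneg hle)
    (Metric.dist_le_diam_of_mem (Metric.isBounded_iff.2 ⟨_, hle⟩) ha hb)

variable (ι) in
def sideSum : Module.Dual ℝ ((ι → ℝ) × (ι → ℝ)) where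
  toFun p := ∑ i, (p.2 i - p.1 i)
  map_add' p q := by
    simp only [Prod.fst_add, Prod.snd_add, Pi.add_apply, ← Finset.sum_add_distrib]
    congr 1
    ext
    ring
  map_smul' t p := by simp [Finset.mul_sum, mul_sub]

theorem sideSum_apply (p : (ι → ℝ) × (ι → ℝ)) : sideSum ι p = ∑ i, (p.2 i - p.1 i) := rfl

theorem exists_sideSum_eq_one_axisBox_subset {a b : ι → ℝ} (hab : a ≤ b)
    (h : 1 ≤ dist (WithLp.toLp 2 a) (WithLp.toLp 2 b)) :
    ∃ p, sideSum ι p = 1 ∧ axisBox p.1 p.2 ⊆ axisBox a b := by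
  set T := ∑ i, (b i - a i)
  have hT : 1 ≤ T := h.trans (EuclideanSpace.dist_toLp_le_sum_sub hab)
  refine ⟨(a, a + T⁻¹ • (b - a)), ?_, fun x hx i => uIcc_subset_uIcc left_mem_uIcc ?_ (hx i)⟩
  · simp only [sideSum_apply, Pi.add_apply, Pi.smul_apply, smul_eq_mul, add_sub_cancel_left,
      Pi.sub_apply, ← Finset.mul_sum]
    exact inv_mul_cancel₀ (by positivity)
  · have hba : 0 ≤ b i - a i := sub_nonneg.2 (hab i)
    have hTinv : T⁻¹ ≤ 1 := inv_le_one_of_one_le₀ hT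
    rw [uIcc_of_le (hab i)]
    simp only [Pi.add_apply, Pi.smul_apply, smul_eq_mul, Pi.sub_apply]
    constructor <;> nlinarith [inv_nonneg.2 (zero_le_one.trans hT)]

theorem one_div_sqrt_card_le_diam_axisBox {p : (ι → ℝ) × (ι → ℝ)} (hp : sideSum ι p = 1) :
    1 / √(Fintype.card ι) ≤ Metric.diam (axisBox p.1 p.2) := by
  have h := EuclideanSpace.sum_sub_le_sqrt_card_mul_dist_toLp p.1 p.2
  rw [← sideSum_apply, hp, mul_comm] at h
  rw [diam_axisBox]
  exact div_le_of_le_mul₀ (Real.sqrt_nonneg _) dist_nonneg h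

end

theorem IsAxisParallelBox.exists_eq_axisBox {d : ℕ} {B : Set (EuclideanSpace ℝ (Fin d))}
    (hB : IsAxisParallelBox B) : ∃ a b, a ≤ b ∧ B = axisBox a b := by
  obtain ⟨a, b, hab, rfl⟩ := hB
  exact ⟨a, b, hab, by ext x; simp [axisBox, uIcc_of_le (hab _)]⟩

theorem isAxisParallelBox_axisBox {d : ℕ} (a b : Fin d → ℝ) : IsAxisParallelBox (axisBox a b) :=
  ⟨a ⊓ b, a ⊔ b, fun _ => inf_le_sup, rfl⟩

/-- Helly for box diameter: if every `2d` or fewer members of a finite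
family of convex sets in `ℝ^d` have intersection containing an axis-parallel box of
Euclidean diameter at least one, then the intersection of the whole family contains an
axis-parallel box of diameter at least `d^{-1/2}`. -/
theorem helly_box_diameter (d : ℕ)
    (F : Finset (Set (EuclideanSpace ℝ (Fin d)))) (hF : ∀ S ∈ F, Convex ℝ S)
    (h : ∀ G ⊆ F, G.card ≤ 2 * d →
      ∃ B, IsAxisParallelBox B ∧ 1 ≤ Metric.diam B ∧
        B ⊆ ⋂₀ (G : Set (Set (EuclideanSpace ℝ (Fin d))))) :
    ∃ B, IsAxisParallelBox B ∧ 1 / Real.sqrt d ≤ Metric.diam B ∧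
      B ⊆ ⋂₀ (F : Set (Set (EuclideanSpace ℝ (Fin d)))) := by
  obtain ⟨p, hp_sum, hp⟩ := Convex.helly_theorem_on_hyperplane
    (F := fun S => {p : (Fin d → ℝ) × (Fin d → ℝ) | axisBox p.1 p.2 ⊆ S}) (s := F)
    (sideSum (Fin d)) (fun S hS => convex_setOf_axisBox_subset (hF S hS)) fun G hG hcard => by
      rw [finrank_prod, finrank_fin_fun] at hcard
      obtain ⟨B, hB, hdiam, hBG⟩ := h G hG (by omega)
      obtain ⟨a, b, hab, rfl⟩ := hB.exists_eq_axisBox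
      rw [diam_axisBox] at hdiam
      obtain ⟨q, hq, hqB⟩ := exists_sideSum_eq_one_axisBox_subset hab hdiam
      exact ⟨q, hq, mem_iInter₂.2 fun S hS => hqB.trans (hBG.trans (sInter_subset_of_mem hS))⟩
  refine ⟨axisBox p.1 p.2, isAxisParallelBox_axisBox _ _, ?_,
    subset_sInter fun S hS => mem_iInter₂.1 hp S hS⟩
  simpa using one_div_sqrt_card_le_diam_axisBox hp_sum
end

section
/- A convex combination in S*(M) stays in S*(M): Let M ⊆ ℝ^d be convex, B_d the unit ball, and S*(M) the set of symmetric positive definite matrices A with sum of entries 1 such that (det A)^{-1/d}·A·B_d ⊆ M. Then S*(M) is convex. -/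
/-!
Write `δ(A) = (det A)^{1/d}`, so that the normalized matrix is `N(A) = δ(A)⁻¹ • A`. For
`X = a • A + b • B` one has `N(X) = s • N(A) + u • N(B)` with `s = a δ(A) / δ(X)` and
`u = b δ(B) / δ(X)`, and since `δ` is homogeneous, Minkowski's determinant inequality
`δ(A + B) ≥ δ(A) + δ(B)` gives `s + u ≤ 1`. A point `N(X) x` with `‖x‖ ≤ 1` is therefore the convex
combination with weights `s / (s + u)`, `u / (s + u)` of `N(A) y` and `N(B) y` for
`y = (s + u) • x`, which lies in the ball again.

Minkowski's inequality reduces, through `A + B = S (1 + C) S` with `S² = A` and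
`C = S⁻¹ B S⁻¹ ≥ 0`, to `1 + (∏ λᵢ)^{1/d} ≤ (∏ (1 + λᵢ))^{1/d}` for the eigenvalues `λᵢ ≥ 0` of `C`,
which is AM–GM applied to `1 / (1 + λᵢ)` and to `λᵢ / (1 + λᵢ)`.
-/

open Pointwise

open Finset

theorem Real.one_add_prod_rpow_le_prod_one_add_rpow {ι : Type*} [Fintype ι] [Nonempty ι]
    (x : ι → ℝ) (hx : ∀ i, 0 ≤ x i) :
    1 + (∏ i, x i) ^ (Fintype.card ι : ℝ)⁻¹ ≤ (∏ i, (1 + x i)) ^ (Fintype.card ι : ℝ)⁻¹ := by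
  set w := (Fintype.card ι : ℝ)⁻¹
  have h1x : ∀ i, 0 < 1 + x i := fun i => by linarith [hx i]
  have hP : 0 < (∏ i, (1 + x i)) ^ w := Real.rpow_pos_of_pos (prod_pos fun i _ => h1x i) w
  have hw : ∑ _i : ι, w = 1 := by simp [w]
  have amgm (z : ι → ℝ) (hz : ∀ i, 0 ≤ z i) : ∏ i, z i ^ w ≤ ∑ i, w * z i :=
    Real.geom_mean_le_arith_mean_weighted univ (fun _ => w) z
      (fun _ _ => inv_nonneg.2 (Nat.cast_nonneg _)) hw (fun i _ => hz i)
  have h1 := amgm (fun i => 1 / (1 + x i)) fun i => (one_div_pos.2 (h1x i)).le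
  have h2 := amgm (fun i => x i / (1 + x i)) fun i => div_nonneg (hx i) (h1x i).le
  simp only [Real.div_rpow zero_le_one (h1x _).le, Real.div_rpow (hx _) (h1x _).le,
    prod_div_distrib, Real.finsetProd_rpow univ _ (fun i _ => hx i),
    Real.finsetProd_rpow univ _ (fun i _ => (h1x i).le), Real.one_rpow, prod_const_one] at h1 h2
  rw [← div_le_one hP]
  calc (1 + (∏ i, x i) ^ w) / (∏ i, (1 + x i)) ^ w
      = 1 / (∏ i, (1 + x i)) ^ w + (∏ i, x i) ^ w / (∏ i, (1 + x i)) ^ w := add_div _ _ _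
    _ ≤ ∑ i, w * (1 / (1 + x i)) + ∑ i, w * (x i / (1 + x i)) := add_le_add h1 h2
    _ = ∑ _i : ι, w := by
      rw [← sum_add_distrib]
      refine sum_congr rfl fun i _ => ?_
      field_simp [(h1x i).ne']
    _ = 1 := hw

namespace Matrix

variable {n : Type*} [Fintype n] [DecidableEq n]

open Polynomial in
theorem IsHermitian.det_one_add {C : Matrix n n ℝ} (hC : C.IsHermitian) :
    (1 + C).det = ∏ i, (1 + hC.eigenvalues i) := by
  have h := congrArg (eval (-1)) hC.charpoly_eq
  have hneg : scalar n (-1 : ℝ) - C = -(1 + C) := by rw [map_neg, map_one]; abel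
  simp only [eval_charpoly, eval_prod, hneg, det_neg, eval_sub, eval_X, eval_C,
    RCLike.ofReal_real_eq_id, id] at h
  have hprod : ∏ i, (-1 - hC.eigenvalues i) =
      (-1) ^ Fintype.card n * ∏ i, (1 + hC.eigenvalues i) := by
    rw [← card_univ, ← prod_const, ← prod_mul_distrib]
    exact prod_congr rfl fun i _ => by ring
  rw [hprod] at h
  exact mul_left_cancel₀ (pow_ne_zero _ (by norm_num)) h

theorem PosSemidef.one_add_det_rpow_le [Nonempty n] {C : Matrix n n ℝ} (hC : C.PosSemidef) :
    1 + C.det ^ (Fintype.card n : ℝ)⁻¹ ≤ (1 + C).det ^ (Fintype.card n : ℝ)⁻¹ := by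
  rw [hC.isHermitian.det_one_add, hC.isHermitian.det_eq_prod_eigenvalues]
  simpa using Real.one_add_prod_rpow_le_prod_one_add_rpow _ hC.eigenvalues_nonneg

open scoped MatrixOrder in
theorem PosDef.exists_sqrt {A : Matrix n n ℝ} (hA : A.PosDef) :
    ∃ S : Matrix n n ℝ, S.IsHermitian ∧ IsUnit S.det ∧ S * S = A := by
  have hSS : CFC.sqrt A * CFC.sqrt A = A := CFC.sqrt_mul_sqrt_self A hA.posSemidef.nonneg
  refine ⟨CFC.sqrt A, (nonneg_iff_posSemidef.mp (CFC.sqrt_nonneg A)).isHermitian, ?_, hSS⟩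
  have hdet : (CFC.sqrt A).det * (CFC.sqrt A).det = A.det := by rw [← det_mul, hSS]
  exact (left_ne_zero_of_mul (hdet ▸ hA.det_pos.ne')).isUnit

theorem PosDef.det_rpow_add_le [Nonempty n] {A B : Matrix n n ℝ} (hA : A.PosDef)
    (hB : B.PosSemidef) :
    A.det ^ (Fintype.card n : ℝ)⁻¹ + B.det ^ (Fintype.card n : ℝ)⁻¹ ≤
      (A + B).det ^ (Fintype.card n : ℝ)⁻¹ := by
  obtain ⟨S, hS, hSu, hSS⟩ := hA.exists_sqrt
  set C := S⁻¹ * B * S⁻¹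
  have hC : C.PosSemidef := by
    have := hB.conjTranspose_mul_mul_same S⁻¹
    rwa [hS.inv.eq] at this
  have hBC : S * C * S = B := by
    simp only [C, Matrix.mul_assoc, nonsing_inv_mul _ hSu, Matrix.mul_one]
    rw [← Matrix.mul_assoc, mul_nonsing_inv _ hSu, Matrix.one_mul]
  have hAB : A + B = S * (1 + C) * S := by
    rw [Matrix.mul_add, Matrix.add_mul, Matrix.mul_one, hSS, hBC]
  have hdetB : B.det = A.det * C.det := by
    rw [← hBC, ← hSS]; simp only [det_mul]; ring
  have hdetAB : (A + B).det = A.det * (1 + C).det := by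
    rw [hAB, ← hSS]; simp only [det_mul]; ring
  have hA0 := hA.det_pos.le
  rw [hdetB, hdetAB, Real.mul_rpow hA0 hC.det_nonneg,
    Real.mul_rpow hA0 (PosSemidef.one.add hC).det_nonneg]
  calc _ = A.det ^ (Fintype.card n : ℝ)⁻¹ * (1 + C.det ^ (Fintype.card n : ℝ)⁻¹) := by ring
    _ ≤ _ := by gcongr; exact hC.one_add_det_rpow_le

theorem det_smul_rpow_inv_card [Nonempty n] {A : Matrix n n ℝ} (hA : 0 ≤ A.det) {c : ℝ}
    (hc : 0 ≤ c) :
    (c • A).det ^ (Fintype.card n : ℝ)⁻¹ = c * A.det ^ (Fintype.card n : ℝ)⁻¹ := by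
  rw [det_smul, Real.mul_rpow (pow_nonneg hc _) hA,
    Real.pow_rpow_inv_natCast hc Fintype.card_ne_zero]

noncomputable def detNormalize (A : Matrix n n ℝ) : Matrix n n ℝ :=
  A.det ^ (-(1 : ℝ) / Fintype.card n) • A

theorem detNormalize_eq_inv_smul {A : Matrix n n ℝ} (hA : 0 ≤ A.det) :
    detNormalize A = (A.det ^ (Fintype.card n : ℝ)⁻¹)⁻¹ • A := by
  rw [detNormalize, neg_div, one_div, Real.rpow_neg hA]

theorem PosDef.detNormalize_smul_add [Nonempty n] {A B : Matrix n n ℝ} (hA : A.PosDef)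
    (hB : B.PosDef) {a b : ℝ} (ha : 0 < a) (hb : 0 < b) :
    ∃ s u : ℝ, 0 ≤ s ∧ 0 ≤ u ∧ s + u ≤ 1 ∧
      detNormalize (a • A + b • B) = s • detNormalize A + u • detNormalize B := by
  have hC : (a • A + b • B).PosDef := (hA.smul ha).add (hB.smul hb)
  have hmink := (hA.smul ha).det_rpow_add_le (hB.smul hb).posSemidef
  rw [det_smul_rpow_inv_card hA.det_pos.le ha.le, det_smul_rpow_inv_card hB.det_pos.le hb.le]
    at hmink
  rw [detNormalize_eq_inv_smul hA.det_pos.le, detNormalize_eq_inv_smul hB.det_pos.le,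
    detNormalize_eq_inv_smul hC.det_pos.le]
  have hα := Real.rpow_pos_of_pos hA.det_pos (Fintype.card n : ℝ)⁻¹
  have hβ := Real.rpow_pos_of_pos hB.det_pos (Fintype.card n : ℝ)⁻¹
  have hγ := Real.rpow_pos_of_pos hC.det_pos (Fintype.card n : ℝ)⁻¹
  generalize A.det ^ (Fintype.card n : ℝ)⁻¹ = α at *
  generalize B.det ^ (Fintype.card n : ℝ)⁻¹ = β at *
  generalize (a • A + b • B).det ^ (Fintype.card n : ℝ)⁻¹ = γ at *
  refine ⟨a * α / γ, b * β / γ, by positivity, by positivity,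
    by rwa [← add_div, div_le_one hγ], ?_⟩
  rw [smul_add, smul_smul, smul_smul, smul_smul, smul_smul]
  congr 2 <;> field_simp

end Matrix

theorem Convex.image_smul_add_smul_subset {E F : Type*} [AddCommGroup E] [Module ℝ E]
    [AddCommGroup F] [Module ℝ F] {M : Set F} (hM : Convex ℝ M) {K : Set E}
    (hK : StarConvex ℝ 0 K) {f g : E →ₗ[ℝ] F} (hf : f '' K ⊆ M) (hg : g '' K ⊆ M) {s u : ℝ}
    (hs : 0 ≤ s) (hu : 0 ≤ u) (hsu : s + u ≤ 1) : (s • f + u • g) '' K ⊆ M := by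
  rintro _ ⟨x, hx, rfl⟩
  rcases (add_nonneg hs hu).eq_or_lt with h0 | hpos
  · obtain ⟨rfl, rfl⟩ : s = 0 ∧ u = 0 := by constructor <;> linarith
    simpa using hf ⟨0 • x, hK.smul_mem hx le_rfl zero_le_one, rfl⟩
  · have htx : (s + u) • x ∈ K := hK.smul_mem hx hpos.le hsu
    have := hM (hf ⟨_, htx, rfl⟩) (hg ⟨_, htx, rfl⟩) (div_nonneg hs hpos.le)
      (div_nonneg hu hpos.le) (by field_simp)
    convert this using 1
    simp only [LinearMap.add_apply, LinearMap.smul_apply, map_smul, smul_smul]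
    congr 2 <;> field_simp

/-- For a convex `M ⊆ ℝ^d`, the set `S*(M)` of symmetric positive
definite matrices `A` with sum of entries `1` such that `(det A)^{-1/d}·A·B_d ⊆ M`
is convex. -/
theorem convex_normalized_ellipsoid_witness (d : ℕ) (M : Set (EuclideanSpace ℝ (Fin d)))
    (hM : Convex ℝ M) :
    Convex ℝ {A : Matrix (Fin d) (Fin d) ℝ | A.IsSymm ∧ A.PosDef ∧
      (∑ i, ∑ j, A i j) = 1 ∧
      matApply ((A.det ^ (-(1 : ℝ) / d)) • A) ''
        Metric.closedBall (0 : EuclideanSpace ℝ (Fin d)) 1 ⊆ M} := by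
  have hnorm (X : Matrix (Fin d) (Fin d) ℝ) :
      matApply (X.det ^ (-(1 : ℝ) / d) • X) = Matrix.toEuclideanLin X.detNormalize := by
    simp only [Matrix.detNormalize, Fintype.card_fin]; rfl
  rw [convex_iff_forall_pos]
  rintro A ⟨hAs, hA, hA1, hAM⟩ B ⟨hBs, hB, hB1, hBM⟩ a b ha hb hab
  have : Nonempty (Fin d) := by
    rcases d with _ | d
    · simp at hA1
    · infer_instance
  obtain ⟨s, u, hs, hu, hsu, hN⟩ := hA.detNormalize_smul_add hB ha hb
  refine ⟨(hAs.smul a).add (hBs.smul b), (hA.smul ha).add (hB.smul hb), ?_, ?_⟩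
  · simp [sum_add_distrib, ← mul_sum, hA1, hB1, hab]
  · rw [hnorm] at hAM hBM ⊢
    rw [hN, map_add, map_smul, map_smul]
    have hball := (convex_closedBall (0 : EuclideanSpace ℝ (Fin d)) 1).starConvex
      (Metric.mem_closedBall_self zero_le_one)
    exact hM.image_smul_add_smul_subset hball hAM hBM hs hu hsu
end

section
/- Tverberg theorem via Minkowski parametrization: Let 𝓒 be a family of convex sets in ℝ^d with a surjective map D : ℝ^l → 𝓒 satisfying D(conv F) ⊆ conv(D(F)) for every finite F ⊆ ℝ^l (where conv(D(F)) means the convex hull of the union), and let f : 𝓒 → ℝ be such that f ∘ D is min-concave on ℝ^l. Given a family 𝓕 ⊆ 𝓒 of (r-1)(l+1)+1 sets with f(K) ≥ 1 for all K ∈ 𝓕, there is a partition of 𝓕 into r parts 𝓐_1, …, 𝓐_r and a set K ∈ 𝓒 with f(K) ≥ 1 contained in ∩_{j=1}^r conv(∪𝓐_j). -/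
/-!
Pull every set of the family back to a point `x i ∈ ℝˡ` with `D (x i) = F i`. Tverberg's
theorem splits these `(r-1)(l+1)+1` points into `r` classes whose convex hulls share a point `p`.
Min-concavity makes `{z | 1 ≤ f (D z)}` convex, so `f (D p) ≥ 1`, and the hull condition on `D`
puts `K = D p` inside the convex hull of each class.

Tverberg's theorem itself is proved by Sarkaria's tensor trick: lifting `x i` to `(x i, 1)` and
tensoring with vectors `v₀, …, v_{r-1}` of `ℝ^{r-1}` whose only linear relation is their sum, a
colourful choice surrounding `0` in `ℝ^{(r-1)(l+1)}` is exactly a Tverberg partition. The colourful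
Carathéodory theorem (Bárány) provides that choice: the colourful hull closest to `0` must contain
it, since otherwise the nearest point `p` lies in a face spanned by at most `dim` colourful points
and swapping the unused colour for a point of its class with `⟪p, ·⟫ ≤ 0` gets closer to `0`.
-/

open Finset Module RealInnerProductSpace

theorem convexHull_range_eq_image_stdSimplex {ι E : Type*} [Fintype ι] [AddCommGroup E]
    [Module ℝ E] (y : ι → E) :
    convexHull ℝ (Set.range y) = (fun w => ∑ i, w i • y i) '' stdSimplex ℝ ι := by
  classical
  have hL : (fun w => ∑ i, w i • y i) = Fintype.linearCombination ℝ y := by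
    ext w; simp [Fintype.linearCombination_apply]
  have hy : y = Fintype.linearCombination ℝ y ∘ fun i => Pi.single i 1 := by
    ext i; simp [Fintype.linearCombination_apply_single]
  rw [← convexHull_rangle_single_eq_stdSimplex, hL, LinearMap.image_convexHull, ← Set.range_comp,
    ← hy]

theorem AffineIndependent.linearIndependent_of_forall_apply_eq {k E ι : Type*} [Field k]
    [AddCommGroup E] [Module k E] {z : ι → E} (hz : AffineIndependent k z) (g : E →ₗ[k] k)
    {c : k} (hc : c ≠ 0) (hg : ∀ i, g (z i) = c) : LinearIndependent k z := by
  rw [linearIndependent_iff']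
  intro s a hsum
  refine (affineIndependent_iff.1 hz) s a ?_ hsum
  have := congrArg g hsum
  simp only [map_sum, map_smul, hg, smul_eq_mul, map_zero, ← Finset.sum_mul] at this
  exact (mul_eq_zero.1 this).resolve_right hc

section InnerProductSpace

variable {F : Type*} [NormedAddCommGroup F] [InnerProductSpace ℝ F]

theorem IsMinOn.norm_sq_le_inner {K : Set F} (hK : Convex ℝ K) {p : F} (hp : p ∈ K)
    (hmin : IsMinOn norm K p) {z : F} (hz : z ∈ K) : ‖p‖ ^ 2 ≤ ⟪p, z⟫ := by
  have : Nonempty K := ⟨⟨p, hp⟩⟩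
  have hinf : ‖0 - p‖ = ⨅ w : K, ‖0 - (w : F)‖ :=
    le_antisymm (le_ciInf fun w => by simpa using hmin w.2)
      (ciInf_le ⟨0, by rintro _ ⟨w, rfl⟩; exact norm_nonneg _⟩ (⟨p, hp⟩ : K))
  have := (norm_eq_iInf_iff_real_inner_le_zero hK hp).1 hinf z hz
  rw [zero_sub, inner_neg_left, inner_sub_right, real_inner_self_eq_norm_sq] at this
  linarith

theorem exists_card_le_finrank_mem_convexHull_image [FiniteDimensional ℝ F] {ι : Type*}
    {y : ι → F} {p : F} (hp : p ∈ convexHull ℝ (Set.range y)) (hp0 : p ≠ 0)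
    (hy : ∀ i, ‖p‖ ^ 2 ≤ ⟪p, y i⟫) :
    ∃ s : Finset ι, #s ≤ finrank ℝ F ∧ p ∈ convexHull ℝ (y '' s) := by
  classical
  obtain ⟨κ, _, z, w, hzy, hz, hw0, hw1, hp⟩ := eq_pos_convex_span_of_mem_convexHull hp
  choose g hg using fun k => hzy (Set.mem_range_self k)
  have hface : ∀ k, ⟪p, z k⟫ = ‖p‖ ^ 2 := by
    have hsum : ∑ k, w k * (⟪p, z k⟫ - ‖p‖ ^ 2) = 0 := by
      simp only [mul_sub, Finset.sum_sub_distrib, ← Finset.sum_mul, hw1, one_mul,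
        ← real_inner_smul_right, ← inner_sum, hp, real_inner_self_eq_norm_sq, sub_self]
    have hnonneg : ∀ k ∈ univ, 0 ≤ w k * (⟪p, z k⟫ - ‖p‖ ^ 2) := fun k _ =>
      mul_nonneg (hw0 k).le (sub_nonneg.2 (hg k ▸ hy (g k)))
    intro k
    have := (Finset.sum_eq_zero_iff_of_nonneg hnonneg).1 hsum k (mem_univ k)
    linarith [(mul_eq_zero.1 this).resolve_left (hw0 k).ne']
  have hlin := hz.linearIndependent_of_forall_apply_eq (innerₛₗ ℝ p)
    (pow_ne_zero 2 (norm_ne_zero_iff.2 hp0)) hface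
  refine ⟨univ.image g, card_image_le.trans (hlin.fintype_card_le_finrank), ?_⟩
  rw [← hp]
  refine mem_convexHull_of_exists_fintype w z (fun k => (hw0 k).le) hw1 (fun k => ?_) rfl
  exact ⟨g k, by simp, hg k⟩

theorem colorful_caratheodory_of_inner [FiniteDimensional ℝ F] {ι κ : Type*} [Fintype ι]
    [Finite κ] (hι : finrank ℝ F < Fintype.card ι) (C : ι → κ → F)
    (hC : ∀ i, (0 : F) ∈ convexHull ℝ (Set.range (C i))) :
    ∃ φ : ι → κ, (0 : F) ∈ convexHull ℝ (Set.range fun i => C i (φ i)) := by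
  classical
  set S : (ι → κ) → Set F := fun φ => convexHull ℝ (Set.range fun i => C i (φ i))
  obtain ⟨i₀⟩ : Nonempty ι := Fintype.card_pos_iff.1 (by omega)
  obtain ⟨j₀⟩ : Nonempty κ :=
    Set.range_nonempty_iff_nonempty.1 (convexHull_nonempty_iff.1 ⟨0, hC i₀⟩)
  obtain ⟨p, hpK, hmin⟩ := (isCompact_iUnion fun φ => (Set.finite_range _).isCompact_convexHull ℝ
    (s := Set.range fun i => C i (φ i))).exists_isMinOn
    ⟨_, Set.mem_iUnion_of_mem (fun _ => j₀) (subset_convexHull ℝ _ ⟨i₀, rfl⟩)⟩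
    continuous_norm.continuousOn
  obtain ⟨φ, hpS⟩ := Set.mem_iUnion.1 hpK
  have hminS : ∀ ψ, IsMinOn norm (S ψ) p := fun ψ => hmin.on_subset (Set.subset_iUnion S ψ)
  refine ⟨φ, by_contra fun h0 => ?_⟩
  have hp0 : p ≠ 0 := by rintro rfl; exact h0 hpS
  obtain ⟨s, hs, hps⟩ := exists_card_le_finrank_mem_convexHull_image hpS hp0 fun i =>
    (hminS φ).norm_sq_le_inner (convex_convexHull ℝ _) hpS (subset_convexHull ℝ _ ⟨i, rfl⟩)
  obtain ⟨i, -, hi⟩ := exists_mem_notMem_of_card_lt_card (s := s) (t := univ)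
    (by rw [card_univ]; omega)
  -- Some point of the colour class `i`, which surrounds `0`, lies in the half-space `⟪p, ·⟫ ≤ 0`.
  obtain ⟨_, ⟨j, rfl⟩, hj⟩ := ((innerₛₗ ℝ p).concaveOn convex_univ).exists_le_of_mem_convexHull
    (Set.subset_univ _) (hC i)
  set ψ := Function.update φ i j
  have hpψ : p ∈ S ψ := by
    refine convexHull_mono ?_ hps
    rintro _ ⟨k, hk, rfl⟩
    exact ⟨k, by simp only [ψ, Function.update_of_ne (ne_of_mem_of_not_mem hk hi)]⟩
  have hq : C i j ∈ S ψ := subset_convexHull ℝ _ ⟨i, by simp only [ψ, Function.update_self]⟩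
  have := (hminS ψ).norm_sq_le_inner (convex_convexHull ℝ _) hpψ hq
  simp only [innerₛₗ_apply_apply, inner_zero_right] at hj
  exact hp0 (by simpa using this.trans hj)

end InnerProductSpace

theorem LinearEquiv.apply_mem_convexHull_image_iff {E E' : Type*} [AddCommGroup E] [Module ℝ E]
    [AddCommGroup E'] [Module ℝ E'] (e : E ≃ₗ[ℝ] E') {s : Set E} {x : E} :
    e x ∈ convexHull ℝ (e '' s) ↔ x ∈ convexHull ℝ s := by
  rw [← e.coe_coe, ← LinearMap.image_convexHull, e.coe_coe, e.injective.mem_set_image]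

theorem colorful_caratheodory {E : Type*} [AddCommGroup E] [Module ℝ E] [FiniteDimensional ℝ E]
    {ι κ : Type*} [Fintype ι] [Finite κ] (hι : finrank ℝ E < Fintype.card ι) (C : ι → κ → E)
    (hC : ∀ i, (0 : E) ∈ convexHull ℝ (Set.range (C i))) :
    ∃ φ : ι → κ, (0 : E) ∈ convexHull ℝ (Set.range fun i => C i (φ i)) := by
  classical
  let e := LinearEquiv.ofFinrankEq E (EuclideanSpace ℝ (Fin (finrank ℝ E)))
    finrank_euclideanSpace_fin.symm
  have he (s : Set E) : (0 : E) ∈ convexHull ℝ s ↔ 0 ∈ convexHull ℝ (e '' s) := by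
    rw [← e.map_zero, e.apply_mem_convexHull_image_iff]
  obtain ⟨φ, hφ⟩ := colorful_caratheodory_of_inner (by simpa using hι) (fun i j => e (C i j))
    fun i => by simpa only [Set.range_comp'] using (he _).1 (hC i)
  exact ⟨φ, (he _).2 (by simpa only [Set.range_comp'] using hφ)⟩

/-- The vectors `e₀, …, e_{m-1}, -(e₀ + ⋯ + e_{m-1})` of `ℝᵐ`: they sum to zero, and that is their
only linear relation up to scaling. -/
def sarkariaVec (m : ℕ) : Fin (m + 1) → Fin m → ℝ :=
  Fin.lastCases (fun _ => -1) fun j => Pi.single j 1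

theorem sum_sarkariaVec_smul {W : Type*} [AddCommGroup W] [Module ℝ W] {m : ℕ}
    (w : Fin (m + 1) → W) (s : Fin m) :
    ∑ j, sarkariaVec m j s • w j = w s.castSucc - w (Fin.last m) := by
  simp [Fin.sum_univ_castSucc, sarkariaVec, Pi.single_apply, sub_eq_add_neg]

theorem sum_sarkariaVec (m : ℕ) (s : Fin m) : ∑ j, sarkariaVec m j s = 0 := by
  simpa using sum_sarkariaVec_smul (fun _ => (1 : ℝ)) s

theorem eq_of_sum_sarkariaVec_smul_eq_zero {W : Type*} [AddCommGroup W] [Module ℝ W] {m : ℕ}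
    {w : Fin (m + 1) → W} (hw : ∀ s, ∑ j, sarkariaVec m j s • w j = 0) (j : Fin (m + 1)) :
    w j = w (Fin.last m) := by
  induction j using Fin.lastCases with
  | last => rfl
  | cast s => simpa [sum_sarkariaVec_smul, sub_eq_zero] using hw s

theorem tverberg_partition {V : Type*} [AddCommGroup V] [Module ℝ V] [FiniteDimensional ℝ V]
    {ι : Type*} [Fintype ι] {m : ℕ} (hι : m * (finrank ℝ V + 1) < Fintype.card ι) (x : ι → V) :
    ∃ (φ : ι → Fin (m + 1)) (p : V), ∀ j, p ∈ convexHull ℝ (x '' {i | φ i = j}) := by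
  classical
  set a : ι → V × ℝ := fun i => (x i, 1)
  set C : ι → Fin (m + 1) → Fin m → V × ℝ := fun i j s => sarkariaVec m j s • a i
  have hC : ∀ i, (0 : Fin m → V × ℝ) ∈ convexHull ℝ (Set.range (C i)) := by
    intro i
    refine mem_convexHull_of_exists_fintype (fun _ => ((m : ℝ) + 1)⁻¹) (C i)
      (fun _ => by positivity) (by simp; field_simp) (fun j => ⟨j, rfl⟩) ?_
    ext s : 1
    simp [C, ← Finset.smul_sum, ← Finset.sum_smul, sum_sarkariaVec]
  have hdim : finrank ℝ (Fin m → V × ℝ) < Fintype.card ι := by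
    simpa [Module.finrank_pi_fintype, Module.finrank_prod] using hι
  obtain ⟨φ, hφ⟩ := colorful_caratheodory hdim C hC
  rw [convexHull_range_eq_image_stdSimplex] at hφ
  obtain ⟨μ, ⟨hμ0, hμ1⟩, hμ⟩ := hφ
  set w : Fin (m + 1) → V × ℝ := fun j => ∑ i with φ i = j, μ i • a i
  have hw : ∀ j, w j = w (Fin.last m) := by
    refine eq_of_sum_sarkariaVec_smul_eq_zero fun s => ?_
    have := congrFun hμ s
    simp only [C, w, Finset.smul_sum, Finset.sum_apply, Pi.smul_apply, Pi.zero_apply] at this ⊢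
    rw [← this, ← Finset.sum_fiberwise univ φ]
    refine Finset.sum_congr rfl fun j _ => Finset.sum_congr rfl fun i hi => ?_
    rw [(Finset.mem_filter.1 hi).2, smul_comm]
  have hw1 (j) : (w j).1 = ∑ i with φ i = j, μ i • x i := by simp [w, a, Prod.fst_sum]
  have hw2 (j) : (w j).2 = ∑ i with φ i = j, μ i := by simp [w, a, Prod.snd_sum]
  have hpos : ∀ j, 0 < ∑ i with φ i = j, μ i := by
    have hsum : ∑ j, (w j).2 = 1 := by simp only [hw2, Finset.sum_fiberwise, hμ1]
    simp only [hw, Finset.sum_const, card_univ, Fintype.card_fin, nsmul_eq_mul] at hsum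
    intro j
    rw [← hw2, hw j]
    nlinarith
  refine ⟨φ, ((w (Fin.last m)).2)⁻¹ • (w (Fin.last m)).1, fun j => ?_⟩
  have := Finset.centerMass_mem_convexHull (univ.filter fun i => φ i = j) (fun i _ => hμ0 i)
    (hpos j) (s := x '' {i | φ i = j})
    (fun i hi => Set.mem_image_of_mem x (Finset.mem_filter.1 hi).2)
  rwa [Finset.centerMass, ← hw1, ← hw2, hw j] at this

theorem tverberg_minkowski_parametrization_general (d l r : ℕ) (hr : 1 ≤ r)
    (𝓒 : Set (Set (Fin d → ℝ)))
    (D : (Fin l → ℝ) → Set (Fin d → ℝ)) (hD : Set.range D = 𝓒)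
    (hDconv : ∀ F : Finset (Fin l → ℝ), ∀ x ∈ convexHull ℝ (F : Set (Fin l → ℝ)),
      D x ⊆ convexHull ℝ (⋃ a ∈ F, D a))
    (f : Set (Fin d → ℝ) → ℝ)
    (hf : ∀ x y : Fin l → ℝ, ∀ lam ∈ Set.Icc (0 : ℝ) 1,
      min (f (D x)) (f (D y)) ≤ f (D (lam • x + (1 - lam) • y)))
    (F : Fin ((r - 1) * (l + 1) + 1) → Set (Fin d → ℝ))
    (hFmem : ∀ i, F i ∈ 𝓒) (hFf : ∀ i, 1 ≤ f (F i)) :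
    ∃ P : Fin ((r - 1) * (l + 1) + 1) → Fin r, ∃ K ∈ 𝓒, 1 ≤ f K ∧
      ∀ j : Fin r, K ⊆ convexHull ℝ (⋃ i ∈ {i | P i = j}, F i) := by
  classical
  obtain ⟨m, rfl⟩ : ∃ m, r = m + 1 := ⟨r - 1, by omega⟩
  choose x hx using fun i => hD ▸ hFmem i
  obtain ⟨φ, p, hp⟩ := tverberg_partition (m := m) (by simp) x
  have hconv : Convex ℝ {z | 1 ≤ f (D z)} := by
    have : QuasiconcaveOn ℝ Set.univ (f ∘ D) := quasiconcaveOn_iff_min_le.2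
      ⟨convex_univ, fun y _ z _ a b ha hb hab => by
        simpa [← eq_sub_of_add_eq' hab] using hf y z a ⟨ha, by linarith⟩⟩
    simpa using this 1
  have hpS : 1 ≤ f (D p) := by
    refine convexHull_min ?_ hconv (hp 0)
    rintro _ ⟨i, -, rfl⟩
    rw [Set.mem_ofPred_eq, hx i]
    exact hFf i
  refine ⟨φ, D p, hD ▸ ⟨p, rfl⟩, hpS, fun j => ?_⟩
  refine (hDconv ((univ.filter fun i => φ i = j).image x) p (by simpa using hp j)).trans
    (convexHull_mono ?_)
  refine Set.iUnion₂_subset fun _ ha => ?_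
  obtain ⟨i, hi, rfl⟩ := Finset.mem_image.1 ha
  rw [hx i]
  exact Set.subset_biUnion_of_mem (u := F) (Finset.mem_filter.1 hi).2

/-- Tverberg theorem via a parametrization `D : ℝ^l → 𝓒` satisfying
`D(conv F) ⊆ conv(⋃ D(F))` for finite `F`, with `f ∘ D` min-concave: any family of
`(r-1)(l+1)+1` members of `𝓒` with `f ≥ 1` admits a partition into `r` parts whose
convex hulls all contain a common `K ∈ 𝓒` with `f(K) ≥ 1`. -/
theorem tverberg_minkowski_parametrization (d l r : ℕ) (hr : 1 ≤ r)
    (𝓒 : Set (Set (Fin d → ℝ))) (h𝓒 : ∀ C ∈ 𝓒, Convex ℝ C)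
    (D : (Fin l → ℝ) → Set (Fin d → ℝ)) (hD : Set.range D = 𝓒)
    (hDconv : ∀ F : Finset (Fin l → ℝ), ∀ x ∈ convexHull ℝ (F : Set (Fin l → ℝ)),
      D x ⊆ convexHull ℝ (⋃ a ∈ F, D a))
    (f : Set (Fin d → ℝ) → ℝ)
    (hf : ∀ x y : Fin l → ℝ, ∀ lam ∈ Set.Icc (0 : ℝ) 1,
      min (f (D x)) (f (D y)) ≤ f (D (lam • x + (1 - lam) • y)))
    (F : Fin ((r - 1) * (l + 1) + 1) → Set (Fin d → ℝ))
    (hFmem : ∀ i, F i ∈ 𝓒) (hFf : ∀ i, 1 ≤ f (F i)) :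
    ∃ P : Fin ((r - 1) * (l + 1) + 1) → Fin r, ∃ K ∈ 𝓒, 1 ≤ f K ∧
      ∀ j : Fin r, K ⊆ convexHull ℝ (⋃ i ∈ {i | P i = j}, F i) :=
  tverberg_minkowski_parametrization_general d l r hr 𝓒 D hD hDconv f hf F hFmem hFf
end

section
/- Tverberg for increasing segments: Given a family of 2(r-1)d + 1 segments in ℝ^d, each increasing (endpoints comparable in the coordinatewise order) and each of ℓ¹-length exactly one, there exists a partition of the family into r parts 𝓐_1, …, 𝓐_r such that ∩_{j=1}^r conv(∪𝓐_j) contains an increasing segment of ℓ¹-length one. -/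
/-!
Encode the increasing segment `[y, x]` by the point `(y, x - y) ∈ ℝ^d × ℝ^d`; the unit-length
segments become points of the hyperplane where the increments sum to one, and since
`y + τ (x - y)` depends linearly on the code, a common point of the convex hulls of the codes
of the parts decodes to a common increasing unit segment. The required partition is given by
Tverberg's theorem for points on a hyperplane of `ℝ^(2d)` avoiding the origin, which needs
`(r - 1) · 2d + 1` points. Tverberg's theorem follows from Bárány's colorful Carathéodory
theorem by Sarkaria's tensor trick.
-/

open Pointwise

/-- An increasing segment of `ℓ¹`-length one in `ℝ^d`: a segment whose endpoints are
comparable in the coordinatewise order and whose coordinate increments sum to one. -/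
def IsIncrUnitSegment {d : ℕ} (S : Set (Fin d → ℝ)) : Prop :=
  ∃ x y : Fin d → ℝ, (∀ i, y i ≤ x i) ∧ (∑ i, (x i - y i)) = 1 ∧ S = segment ℝ y x

open Set Module
open scoped RealInnerProductSpace

section Convex

variable {E : Type*} [AddCommGroup E] [Module ℝ E]

theorem mem_convexHull_range_iff_exists_sum {ι : Type*} [Fintype ι] {v : ι → E} {x : E} :
    x ∈ convexHull ℝ (range v) ↔
      ∃ w : ι → ℝ, (∀ i, 0 ≤ w i) ∧ ∑ i, w i = 1 ∧ ∑ i, w i • v i = x := by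
  classical
  constructor
  · intro hx
    have hv : range v = Fintype.linearCombination ℝ v '' range fun i => Pi.single i 1 := by
      rw [← range_comp]
      congr 1
      funext i
      simp
    rw [hv, ← LinearMap.image_convexHull, convexHull_rangle_single_eq_stdSimplex] at hx
    obtain ⟨w, ⟨hw0, hw1⟩, rfl⟩ := hx
    exact ⟨w, hw0, hw1, by simp [Fintype.linearCombination_apply]⟩
  · rintro ⟨w, hw0, hw1, rfl⟩
    exact (convex_convexHull ℝ _).sum_mem (fun i _ => hw0 i) hw1
      fun i _ => subset_convexHull ℝ _ (mem_range_self i)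

theorem exists_map_nonpos_of_zero_mem_convexHull {s : Set E} (hs : (0 : E) ∈ convexHull ℝ s)
    (l : E →ₗ[ℝ] ℝ) : ∃ y ∈ s, l y ≤ 0 := by
  by_contra! h
  have : 0 < l 0 := convexHull_min h (convex_halfSpace_gt l.isLinear 0) hs
  simp at this

theorem LinearMap.map_eq_of_sum_smul_le {ι : Type*} [Fintype ι] (l : E →ₗ[ℝ] ℝ) {w : ι → ℝ}
    {z : ι → E} {c : ℝ} (hw0 : ∀ i, 0 < w i) (hw1 : ∑ i, w i = 1) (hz : ∀ i, c ≤ l (z i))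
    (hc : l (∑ i, w i • z i) ≤ c) (i : ι) : l (z i) = c := by
  have hterm : ∀ j, 0 ≤ w j * (l (z j) - c) := fun j =>
    mul_nonneg (hw0 j).le (sub_nonneg.2 (hz j))
  have hsum : ∑ j, w j * (l (z j) - c) = 0 := by
    refine le_antisymm ?_ (Finset.sum_nonneg fun j _ => hterm j)
    simpa [mul_sub, Finset.sum_sub_distrib, ← Finset.sum_mul, hw1] using hc
  have := (Finset.sum_eq_zero_iff_of_nonneg fun j _ => hterm j).1 hsum i (Finset.mem_univ i)
  linarith [(mul_eq_zero.1 this).resolve_left (hw0 i).ne']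

theorem segment_subset_convexHull_biUnion {F : Type*} [AddCommGroup F] [Module ℝ F]
    (a b : E →ₗ[ℝ] F) {S : Set E} {p : E} (hp : p ∈ convexHull ℝ S) :
    segment ℝ (a p) (b p) ⊆ convexHull ℝ (⋃ q ∈ S, segment ℝ (a q) (b q)) := by
  rintro _ ⟨s, t, hs, ht, hst, rfl⟩
  have h : (s • a + t • b) p ∈ convexHull ℝ ((s • a + t • b) '' S) := by
    rw [← LinearMap.image_convexHull]
    exact mem_image_of_mem _ hp
  refine convexHull_mono ?_ h
  rintro _ ⟨q, hq, rfl⟩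
  exact mem_biUnion hq ⟨s, t, hs, ht, hst, rfl⟩

end Convex

section ColorfulCaratheodory

variable {E : Type*} [NormedAddCommGroup E] [InnerProductSpace ℝ E]

theorem norm_sq_le_inner_of_forall_norm_le {K : Set E} (hK : Convex ℝ K) {v w : E}
    (hv : v ∈ K) (hmin : ∀ w ∈ K, ‖v‖ ≤ ‖w‖) (hw : w ∈ K) : ‖v‖ ^ 2 ≤ ⟪v, w⟫ := by
  have : Nonempty K := ⟨⟨v, hv⟩⟩
  have hinf : ‖0 - v‖ = ⨅ w : K, ‖0 - (w : E)‖ := by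
    simp only [zero_sub, norm_neg]
    have hbdd : BddBelow (range fun w : K => ‖(w : E)‖) := ⟨0, by rintro _ ⟨w, rfl⟩; positivity⟩
    exact le_antisymm (le_ciInf fun w => hmin w w.2) (ciInf_le hbdd ⟨v, hv⟩)
  have h := (norm_eq_iInf_iff_real_inner_le_zero hK hv).1 hinf w hw
  rw [zero_sub, inner_neg_left, inner_sub_right, real_inner_self_eq_norm_sq] at h
  linarith

/-- `v` lies in the face `{⟪v, ·⟫ = ‖v‖²}`, of dimension less than `finrank ℝ E`, so
Carathéodory's theorem in that face leaves out one of the vertices. -/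
theorem exists_mem_convexHull_image_compl_of_norm_sq_le_inner [FiniteDimensional ℝ E]
    {ι : Type*} [Fintype ι] (hι : finrank ℝ E < Fintype.card ι) {σ : ι → E} {v : E}
    (hv : v ∈ convexHull ℝ (range σ)) (hv0 : v ≠ 0) (hσ : ∀ k, ‖v‖ ^ 2 ≤ ⟪v, σ k⟫) :
    ∃ k₀, v ∈ convexHull ℝ (σ '' {k₀}ᶜ) := by
  obtain ⟨κ, _, z, w, hzσ, hz, hw0, hw1, hwz⟩ := eq_pos_convex_span_of_mem_convexHull hv
  choose c hc using fun a => hzσ (mem_range_self a)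
  have hface : ∀ a, ⟪v, z a⟫ = ‖v‖ ^ 2 := by
    refine (innerₗ E v).map_eq_of_sum_smul_le hw0 hw1 (fun a => ?_) ?_
    · simpa [hc a] using hσ (c a)
    · simp [hwz]
  have hspan : vectorSpan ℝ (range z) ≤ (ℝ ∙ v)ᗮ := by
    rw [vectorSpan_def, Submodule.span_le]
    rintro _ ⟨_, ⟨a, rfl⟩, _, ⟨b, rfl⟩, rfl⟩
    simp [Submodule.mem_orthogonal_singleton_iff_inner_right, inner_sub_right, hface]
  have hcard : Fintype.card κ < Fintype.card ι :=
    calc Fintype.card κ ≤ finrank ℝ (vectorSpan ℝ (range z)) + 1 := hz.card_le_finrank_succ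
      _ ≤ finrank ℝ (ℝ ∙ v)ᗮ + 1 := by gcongr; exact Submodule.finrank_mono hspan
      _ = finrank ℝ E := by
        rw [← (ℝ ∙ v).finrank_add_finrank_orthogonal, finrank_span_singleton hv0, add_comm]
      _ < Fintype.card ι := hι
  obtain ⟨k₀, hk₀⟩ : ∃ k₀, ∀ a, c a ≠ k₀ := by
    by_contra! h
    exact hcard.not_ge (Fintype.card_le_of_surjective c h)
  refine ⟨k₀, hwz ▸ (convex_convexHull ℝ _).sum_mem (fun a _ => (hw0 a).le) hw1 fun a _ => ?_⟩
  exact subset_convexHull ℝ _ ⟨c a, hk₀ a, hc a⟩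

/-- **Colorful Carathéodory theorem** (Bárány). A transversal whose hull is nearest to `0`
contains it: otherwise the nearest point `v` avoids some color `k₀`, and swapping in a point of
color `k₀` with `⟪v, ·⟫ ≤ 0` comes closer to `0`. -/
theorem exists_zero_mem_convexHull_transversal [FiniteDimensional ℝ E] {ι κ : Type*}
    [Fintype ι] [Finite κ] (hι : finrank ℝ E < Fintype.card ι) (u : ι → κ → E)
    (hu : ∀ k, (0 : E) ∈ convexHull ℝ (range (u k))) :
    ∃ P : ι → κ, (0 : E) ∈ convexHull ℝ (range fun k => u k (P k)) := by
  classical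
  let K : (ι → κ) → Set E := fun P => convexHull ℝ (range fun k => u k (P k))
  have : Nonempty ι := Fintype.card_pos_iff.1 (by omega)
  have : Nonempty κ := by
    obtain ⟨k⟩ := ‹Nonempty ι›
    exact range_nonempty_iff_nonempty.1 (convexHull_nonempty_iff.1 ⟨0, hu k⟩)
  obtain ⟨P, hP⟩ := Finite.exists_min fun P => Metric.infDist (0 : E) (K P)
  obtain ⟨v, hvP, hv⟩ :=
    ((finite_range fun k => u k (P k)).isCompact_convexHull (𝕜 := ℝ)).exists_infDist_eq_dist
      (convexHull_nonempty_iff.2 (range_nonempty _)) (0 : E)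
  have hmin : ∀ Q, ∀ w ∈ K Q, ‖v‖ ≤ ‖w‖ := fun Q w hw =>
    calc ‖v‖ = Metric.infDist 0 (K P) := by rw [hv, dist_zero_left]
      _ ≤ Metric.infDist 0 (K Q) := hP Q
      _ ≤ ‖w‖ := dist_zero_left w ▸ Metric.infDist_le_dist_of_mem hw
  have hface : ∀ Q, v ∈ K Q → ∀ w ∈ K Q, ‖v‖ ^ 2 ≤ ⟪v, w⟫ := fun Q hvQ _ hw =>
    norm_sq_le_inner_of_forall_norm_le (convex_convexHull ℝ _) hvQ (hmin Q) hw
  refine ⟨P, ?_⟩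
  by_contra h0
  have hv0 : v ≠ 0 := by rintro rfl; exact h0 hvP
  obtain ⟨k₀, hk₀⟩ := exists_mem_convexHull_image_compl_of_norm_sq_le_inner hι hvP hv0
    fun k => hface P hvP _ (subset_convexHull ℝ _ (mem_range_self k))
  obtain ⟨_, ⟨i, rfl⟩, hi⟩ :=
    exists_map_nonpos_of_zero_mem_convexHull (hu k₀) (innerₗ E v : E →ₗ[ℝ] ℝ)
  let Q := Function.update P k₀ i
  have hvQ : v ∈ K Q := by
    refine convexHull_mono ?_ hk₀
    rintro _ ⟨k, hk, rfl⟩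
    exact ⟨k, by simp [Q, Function.update_of_ne hk]⟩
  have hvi := hface Q hvQ (u k₀ i) (subset_convexHull ℝ _ ⟨k₀, by simp [Q]⟩)
  simp only [innerₗ_apply_apply] at hi
  exact hv0 (norm_eq_zero.1 (by nlinarith [norm_nonneg v]))

end ColorfulCaratheodory

section Tverberg

/-- Coordinates of `e_s` for `s < m` and of `-(e_0 + ⋯ + e_(m-1))` for `s = m`: these `m + 1`
vectors of `ℝ^m` sum to zero, and by `sum_mul_sarkariaVector` their only linear relations have
constant coefficients. -/
def sarkariaVector {m : ℕ} (s : Fin (m + 1)) (t : Fin m) : ℝ :=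
  (if s = t.castSucc then 1 else 0) - if s = Fin.last m then 1 else 0

theorem sum_mul_sarkariaVector {m : ℕ} (α : Fin (m + 1) → ℝ) (t : Fin m) :
    ∑ s, α s * sarkariaVector s t = α t.castSucc - α (Fin.last m) := by
  simp [sarkariaVector, mul_sub, Finset.sum_sub_distrib]

theorem sum_sarkariaVector {m : ℕ} (t : Fin m) : ∑ s, sarkariaVector s t = 0 := by
  simpa using sum_mul_sarkariaVector 1 t

/-- Sarkaria's trick: colorful Carathéodory for the tensors `sarkariaVector s ⊗ f i`. -/
theorem exists_partition_fiber_sums_eq {ι κ : Type*} [Fintype ι] [Fintype κ] {m : ℕ}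
    (hι : m * Fintype.card κ < Fintype.card ι) (f : ι → κ → ℝ) :
    ∃ (P : ι → Fin (m + 1)) (w : ι → ℝ), (∀ i, 0 ≤ w i) ∧ ∑ i, w i = 1 ∧
      ∀ s, ∑ i with P i = s, w i • f i = ∑ i with P i = Fin.last m, w i • f i := by
  classical
  let u : ι → Fin (m + 1) → EuclideanSpace ℝ (Fin m × κ) := fun i s =>
    WithLp.toLp 2 fun tc => sarkariaVector s tc.1 * f i tc.2
  have hu : ∀ i, (0 : EuclideanSpace ℝ (Fin m × κ)) ∈ convexHull ℝ (range (u i)) := by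
    refine fun i => mem_convexHull_range_iff_exists_sum.2
      ⟨fun _ => 1 / (m + 1), fun _ => by positivity, by simp; field_simp, ?_⟩
    ext tc
    simp [u, ← Finset.mul_sum, ← Finset.sum_mul, sum_sarkariaVector]
  obtain ⟨P, hP⟩ := exists_zero_mem_convexHull_transversal
    (by simpa [finrank_euclideanSpace] using hι) u hu
  obtain ⟨w, hw0, hw1, hw⟩ := mem_convexHull_range_iff_exists_sum.1 hP
  refine ⟨P, w, hw0, hw1, fun s => ?_⟩
  set A := fun s => ∑ i with P i = s, w i • f i
  have hA : ∀ t : Fin m, A t.castSucc = A (Fin.last m) := by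
    intro t
    ext c
    have hfiber :
        ∑ s, A s c * sarkariaVector s t = ∑ i, w i * f i c * sarkariaVector (P i) t := by
      rw [← Finset.sum_fiberwise Finset.univ P]
      refine Finset.sum_congr rfl fun s _ => ?_
      simp only [A, Finset.sum_apply, Pi.smul_apply, smul_eq_mul, Finset.sum_mul]
      exact Finset.sum_congr rfl fun i hi => by rw [(Finset.mem_filter.1 hi).2]
    rw [← sub_eq_zero, ← sum_mul_sarkariaVector (A · c), hfiber]
    simpa [u, mul_left_comm, mul_comm, mul_assoc] using congrArg (· (t, c)) hw
  induction s using Fin.lastCases with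
  | last => rfl
  | cast t => exact hA t

/-- **Tverberg's theorem**; its usual form in `ℝ^n` is the case of the points `(x, 1)`. -/
theorem exists_tverberg_partition {ι κ : Type*} [Fintype ι] [Fintype κ] {m : ℕ}
    (hι : m * Fintype.card κ < Fintype.card ι) {f : ι → κ → ℝ} (ℓ : (κ → ℝ) →ₗ[ℝ] ℝ)
    (hℓ : ∀ i, ℓ (f i) = 1) :
    ∃ (P : ι → Fin (m + 1)) (p : κ → ℝ), ∀ j, p ∈ convexHull ℝ (f '' {i | P i = j}) := by
  classical
  obtain ⟨P, w, hw0, hw1, hA⟩ := exists_partition_fiber_sums_eq hι f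
  set A := ∑ i with P i = Fin.last m, w i • f i
  have hα : ∀ j, ∑ i with P i = j, w i = ℓ A := fun j => by
    simp [← hA j, map_sum, hℓ]
  have hαpos : 0 < ℓ A := by
    have h : ∑ _j : Fin (m + 1), ℓ A = 1 := by
      rw [← hw1, ← Finset.sum_fiberwise Finset.univ P w]
      exact Finset.sum_congr rfl fun j _ => (hα j).symm
    simp only [Finset.sum_const, Finset.card_univ, Fintype.card_fin, nsmul_eq_mul] at h
    push_cast at h
    nlinarith
  refine ⟨P, (ℓ A)⁻¹ • A, fun j => ?_⟩
  have : (Finset.univ.filter (P · = j)).centerMass w f ∈ convexHull ℝ (f '' {i | P i = j}) :=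
    Finset.centerMass_mem_convexHull _ (fun i _ => hw0 i) (hα j ▸ hαpos)
      fun i hi => mem_image_of_mem f (Finset.mem_filter.1 hi).2
  rwa [Finset.centerMass, hα j, hA j] at this

end Tverberg

theorem isIncrUnitSegment_segment_add {d : ℕ} {y v : Fin d → ℝ} (hv : 0 ≤ v)
    (hsum : ∑ k, v k = 1) : IsIncrUnitSegment (segment ℝ y (y + v)) :=
  ⟨y + v, y, fun k => le_add_of_nonneg_right (hv k), by simpa using hsum, rfl⟩

/-- Tverberg for increasing segments: a family of `2(r-1)d + 1`
increasing segments in `ℝ^d`, each of `ℓ¹`-length one, admits a partition into `r` parts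
such that the intersection of the convex hulls of the parts contains an increasing
segment of `ℓ¹`-length one. -/
theorem tverberg_increasing_segments (d r : ℕ) (hr : 1 ≤ r)
    (F : Fin (2 * (r - 1) * d + 1) → Set (Fin d → ℝ))
    (hF : ∀ i, IsIncrUnitSegment (F i)) :
    ∃ P : Fin (2 * (r - 1) * d + 1) → Fin r, ∃ S, IsIncrUnitSegment S ∧
      ∀ j : Fin r, S ⊆ convexHull ℝ (⋃ i ∈ {i | P i = j}, F i) := by
  obtain ⟨m, rfl⟩ : ∃ m, r = m + 1 := ⟨r - 1, by omega⟩
  choose x y hyx hsum hFxy using hF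
  let lo : (Fin d ⊕ Fin d → ℝ) →ₗ[ℝ] Fin d → ℝ := LinearMap.funLeft ℝ ℝ Sum.inl
  let inc : (Fin d ⊕ Fin d → ℝ) →ₗ[ℝ] Fin d → ℝ := LinearMap.funLeft ℝ ℝ Sum.inr
  let ℓ : (Fin d ⊕ Fin d → ℝ) →ₗ[ℝ] ℝ := ∑ k, LinearMap.proj (Sum.inr k)
  let f i : Fin d ⊕ Fin d → ℝ := Sum.elim (y i) (x i - y i)
  have hℓ : ∀ i, ℓ (f i) = 1 := fun i => by simp [ℓ, f, hsum]
  have hF : ∀ i, F i = segment ℝ (lo (f i)) ((lo + inc) (f i)) := fun i => by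
    rw [hFxy]
    congr 1
    ext k
    simp [lo, inc, f, LinearMap.funLeft_apply]
  obtain ⟨P, p, hp⟩ := exists_tverberg_partition (m := m)
    (by simp only [Fintype.card_sum, Fintype.card_fin, Nat.add_sub_cancel]; linarith) ℓ hℓ
  have hp_code : p ∈ {q | 0 ≤ inc q} ∩ {q | ℓ q = 1} :=
    convexHull_min (by rintro _ ⟨i, -, rfl⟩; exact ⟨fun k => sub_nonneg.2 (hyx i k), hℓ i⟩)
      ((convex_halfSpace_ge inc.isLinear 0).inter (convex_hyperplane ℓ.isLinear 1)) (hp 0)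
  refine ⟨P, segment ℝ (lo p) ((lo + inc) p), isIncrUnitSegment_segment_add hp_code.1 ?_,
    fun j => ?_⟩
  · simpa [ℓ, inc] using hp_code.2
  · simpa [Set.biUnion_image, hF] using segment_subset_convexHull_biUnion lo (lo + inc) (hp j)
end
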